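/- arXiv:1106.1954 — 7 statements merged into one kernel-verified Lean document; each statement's English description precedes it below -/
import Mathlib

section
/- Suppose the base transformation θ is ergodic and that for ℙ-almost every ω the measure m∘T_ω⁻¹ has a bounded density with respect to m. Let A be a random set such that for each n the function ω ↦ m(A^{(n)}(ω)) is measurable. Then the escape rate E(A,ω) is ℙ-almost everywhere equal to a constant. -/
/-!
Let `G ω ∈ [-∞, ∞]` be the upper exponential growth rate of `n ↦ m(A^{(n)}(ω))`, computed with
the logarithm `ℝ≥0∞ → EReal` (so a vanishing measure contributes `⊥`, not a junk value). Since
`A^{(n+1)}(ω) ⊆ T_ω⁻¹ A^{(n)}(θω)`, the bounded density gives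
`m(A^{(n+1)}(ω)) ≤ K_ω · m(A^{(n)}(θω))`, hence `G ≤ G ∘ θ` almost everywhere. For a
measure-preserving `θ` every sublevel set `{G < a}` is then almost invariant, so ergodicity makes
`G` almost everywhere constant. Finally, the real `limsup` in the escape rate is `(G ω).toReal`:
when `m(A^{(n)}(ω))` vanishes eventually, or `(1/n) log m(A^{(n)}(ω)) → -∞`, the real `limsup` takes
the junk value `0`, which is exactly `EReal.toReal ⊥`.
-/

open MeasureTheory Filter

/-- The map cocycle: `mapIter θ T n ω = T_{θ^{n-1}ω} ∘ ⋯ ∘ T_ω`. -/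
def mapIter {Ω X : Type*} (θ : Ω → Ω) (T : Ω → X → X) : ℕ → Ω → X → X
  | 0, _, x => x
  | n + 1, ω, x => mapIter θ T n (θ ω) (T ω x)

/-- The random set `A^{(n)}(ω) = ⋂_{i=0}^{n-1} (T_ω^{(i)})⁻¹ A(θ^i ω)`. -/
def setIter {Ω X : Type*} (θ : Ω → Ω) (T : Ω → X → X) (A : Ω → Set X) (n : ℕ) (ω : Ω) :
    Set X :=
  ⋂ i ∈ Finset.range n, mapIter θ T i ω ⁻¹' A (θ^[i] ω)

open ExpGrowth
open scoped ENNReal Topology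

theorem Real.limsup_eq_toReal_limsup_coe {ι : Type*} {F : Filter ι} [NeBot F] {b : ι → ℝ}
    (hb : IsBoundedUnder (· ≤ ·) F b) :
    limsup b F = (limsup (fun i => (b i : EReal)) F).toReal := by
  by_cases hc : IsCoboundedUnder (· ≤ ·) F b
  · rw [← EReal.toReal_coe (limsup b F), Monotone.map_limsup_of_continuousAt
      EReal.coe_strictMono.monotone b continuous_coe_real_ereal.continuousAt hb hc]
    rfl
  · have hbot : Tendsto b F atBot := by
      refine tendsto_atBot.2 fun a => ?_
      by_contra h
      exact hc (IsCoboundedUnder.of_frequently_ge (a := a)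
        ((not_eventually.1 h).mono fun _ h => (not_le.1 h).le))
    have hlim : limsup (fun i => (b i : EReal)) F = ⊥ :=
      (EReal.tendsto_coe_atBot.comp hbot).limsup_eq
    rw [Real.limsup_of_not_isCoboundedUnder hc, hlim, EReal.toReal_bot]

theorem EReal.tendsto_natCast_add_one_div_natCast :
    Tendsto (fun n : ℕ => ((n + 1 : ℕ) : EReal) / n) atTop (𝓝 1) := by
  have h : Tendsto (fun n : ℕ => ((1 + 1 / (n : ℝ) : ℝ) : EReal)) atTop (𝓝 1) := by
    simpa using EReal.tendsto_coe.2 (tendsto_one_div_atTop_nhds_zero_nat.const_add (1 : ℝ))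
  refine h.congr' ((eventually_gt_atTop 0).mono fun n hn => ?_)
  show ((1 + 1 / (n : ℝ) : ℝ) : EReal) = (((n + 1 : ℕ) : ℝ) / (n : ℝ) : ℝ)
  congr 1
  field_simp
  push_cast
  ring

theorem Antitone.expGrowthSup_comp_succ {u : ℕ → ℝ≥0∞} (hu : Antitone u) :
    expGrowthSup (fun n => u (n + 1)) = expGrowthSup u := by
  have hinv : Monotone u⁻¹ := fun _ _ hab => ENNReal.inv_le_inv.2 (hu hab)
  have h := hinv.expGrowthInf_comp EReal.tendsto_natCast_add_one_div_natCast one_ne_zero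
    (EReal.coe_ne_top 1)
  rw [one_mul] at h
  rw [← neg_neg (expGrowthSup u), ← expGrowthInf_inv, ← h,
    show u⁻¹ ∘ (· + 1) = (fun n => u (n + 1))⁻¹ from rfl, expGrowthInf_inv, neg_neg]

theorem Antitone.limsup_inv_mul_log_toReal {u : ℕ → ℝ≥0∞} (hu : Antitone u) (hu0 : u 0 ≠ ∞) :
    limsup (fun n : ℕ => (n : ℝ)⁻¹ * Real.log (u n).toReal) atTop = (expGrowthSup u).toReal := by
  by_cases hz : ∃ N, u N = 0
  · obtain ⟨N, hN⟩ := hz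
    have hzero : u =ᶠ[atTop] 0 :=
      eventually_atTop.2 ⟨N, fun n hn => nonpos_iff_eq_zero.1 ((hu hn).trans_eq hN)⟩
    have hreal : (fun n : ℕ => (n : ℝ)⁻¹ * Real.log (u n).toReal) =ᶠ[atTop] fun _ => 0 :=
      hzero.mono fun n hn => by simp [hn]
    rw [expGrowthSup_congr hzero, expGrowthSup_zero, EReal.toReal_bot, limsup_congr hreal,
      limsup_const]
  · simp only [not_exists] at hz
    have hfin (n : ℕ) : u n ≠ ∞ := ne_top_of_le_ne_top hu0 (hu n.zero_le)
    have hcoe (n : ℕ) :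
        ENNReal.log (u n) / n = (((n : ℝ)⁻¹ * Real.log (u n).toReal : ℝ) : EReal) := by
      rw [ENNReal.log_pos_real (hz n) (hfin n), ← EReal.coe_natCast, ← EReal.coe_div,
        div_eq_inv_mul]
    have hbdd : IsBoundedUnder (· ≤ ·) atTop
        fun n : ℕ => (n : ℝ)⁻¹ * Real.log (u n).toReal := by
      refine isBoundedUnder_of ⟨max (Real.log (u 0).toReal) 0, fun n => ?_⟩
      have hlog : Real.log (u n).toReal ≤ Real.log (u 0).toReal :=
        Real.log_le_log (ENNReal.toReal_pos (hz n) (hfin n))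
          (ENNReal.toReal_mono hu0 (hu n.zero_le))
      calc (n : ℝ)⁻¹ * Real.log (u n).toReal
          ≤ (n : ℝ)⁻¹ * max (Real.log (u 0).toReal) 0 := by
            gcongr
            exact hlog.trans (le_max_left _ _)
        _ ≤ max (Real.log (u 0).toReal) 0 :=
            mul_le_of_le_one_left (le_max_right _ _) (Nat.cast_inv_le_one n)
    rw [Real.limsup_eq_toReal_limsup_coe hbdd, expGrowthSup]
    simp_rw [hcoe]

theorem measurable_expGrowthSup {α : Type*} [MeasurableSpace α] {u : α → ℕ → ℝ≥0∞}
    (hu : ∀ n, Measurable fun x => u x n) : Measurable fun x => expGrowthSup (u x) :=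
  Measurable.limsup fun n =>
    (Monotone.measurable (f := fun y : EReal => y / n) fun _ _ h =>
      EReal.div_le_div_right_of_nonneg n.cast_nonneg' h).comp (ENNReal.measurable_log.comp (hu n))

theorem Ergodic.ae_eq_const_of_ae_le_comp {α X : Type*} [MeasurableSpace α] {μ : Measure α}
    [IsFiniteMeasure μ] [TopologicalSpace X] [LinearOrder X] [OrderTopology X]
    [SecondCountableTopology X] [MeasurableSpace X] [OpensMeasurableSpace X] [Nonempty X]
    {f : α → α} {g : α → X} (hf : Ergodic f μ) (hg : Measurable g) (hle : g ≤ᵐ[μ] g ∘ f) :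
    ∃ c, g =ᵐ[μ] Function.const α c := by
  refine exists_eventuallyEq_const_of_forall_separating (· ∈ Set.range (Set.Iio : X → Set X)) ?_
  rintro _ ⟨a, rfl⟩
  have hsub : f ⁻¹' (g ⁻¹' Set.Iio a) ≤ᵐ[μ] g ⁻¹' Set.Iio a :=
    hle.mono fun x hx hfx => lt_of_le_of_lt hx hfx
  rcases hf.ae_empty_or_univ_of_preimage_ae_le (hg measurableSet_Iio).nullMeasurableSet hsub
    with h | h
  · exact .inr (h.mem_iff.mono fun x hx => hx.1)
  · exact .inl (h.mem_iff.mono fun x hx => hx.2 trivial)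

section Cocycle

variable {Ω X : Type*} {θ : Ω → Ω} {T : Ω → X → X} {A : Ω → Set X}

theorem mem_setIter {n : ℕ} {ω : Ω} {x : X} :
    x ∈ setIter θ T A n ω ↔ ∀ i < n, mapIter θ T i ω x ∈ A (θ^[i] ω) := by
  simp [setIter]

theorem antitone_setIter (ω : Ω) : Antitone fun n => setIter θ T A n ω :=
  fun _ _ hnk _ hx => mem_setIter.2 fun i hi => mem_setIter.1 hx i (hi.trans_le hnk)

theorem setIter_succ_subset (n : ℕ) (ω : Ω) :
    setIter θ T A (n + 1) ω ⊆ T ω ⁻¹' setIter θ T A n (θ ω) :=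
  fun _ hx => mem_setIter.2 fun i hi => mem_setIter.1 hx (i + 1) (Nat.succ_lt_succ hi)

variable [MeasurableSpace X]

theorem antitone_measure_setIter (m : Measure X) (ω : Ω) :
    Antitone fun n => m (setIter θ T A n ω) :=
  fun _ _ h => measure_mono (antitone_setIter ω h)

theorem measurable_mapIter (hT : ∀ ω, Measurable (T ω)) :
    ∀ (n : ℕ) (ω : Ω), Measurable (mapIter θ T n ω)
  | 0, _ => measurable_id
  | n + 1, ω => (measurable_mapIter hT n (θ ω)).comp (hT ω)

theorem measurableSet_setIter (hT : ∀ ω, Measurable (T ω)) (hA : ∀ ω, MeasurableSet (A ω))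
    (n : ℕ) (ω : Ω) : MeasurableSet (setIter θ T A n ω) :=
  .biInter (Finset.range n).countable_toSet fun i _ => measurable_mapIter hT i ω (hA _)

theorem expGrowthSup_measure_setIter_le_comp (hT : ∀ ω, Measurable (T ω))
    (hA : ∀ ω, MeasurableSet (A ω)) {m : Measure X} {ω : Ω} {K : ℝ≥0∞} (hK : K ≠ ∞)
    (hTK : ∀ B, MeasurableSet B → m (T ω ⁻¹' B) ≤ K * m B) :
    expGrowthSup (fun n => m (setIter θ T A n ω)) ≤
      expGrowthSup (fun n => m (setIter θ T A n (θ ω))) := by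
  rw [← (antitone_measure_setIter m ω).expGrowthSup_comp_succ]
  refine expGrowthSup_le_of_eventually_le hK (Eventually.of_forall fun n => ?_)
  exact (measure_mono (setIter_succ_subset n ω)).trans
    (hTK _ (measurableSet_setIter hT hA n (θ ω)))

end Cocycle

theorem escape_rate_ae_constant_general
    {Ω X : Type*} [MeasurableSpace Ω] [MeasurableSpace X]
    (ℙ : Measure Ω) [IsProbabilityMeasure ℙ]
    (m : Measure X) [IsFiniteMeasure m]
    (θ : Ω → Ω) (hθerg : Ergodic θ ℙ)
    (T : Ω → X → X) (hT : ∀ ω, Measurable (T ω))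
    (hbd : ∀ᵐ ω ∂ℙ, ∃ K : NNReal,
      ∀ B : Set X, MeasurableSet B → m (T ω ⁻¹' B) ≤ (K : ENNReal) * m B)
    (A : Ω → Set X) (hA : ∀ ω, MeasurableSet (A ω))
    (hAmeas : ∀ n : ℕ, Measurable fun ω => m (setIter θ T A n ω)) :
    ∃ c : ℝ, ∀ᵐ ω ∂ℙ,
      -Filter.limsup
          (fun n : ℕ => (n : ℝ)⁻¹ * Real.log (m (setIter θ T A n ω)).toReal) Filter.atTop
        = c := by
  set G : Ω → EReal := fun ω => expGrowthSup fun n => m (setIter θ T A n ω)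
  have hG_le : G ≤ᵐ[ℙ] G ∘ θ := hbd.mono fun ω ⟨K, hK⟩ =>
    expGrowthSup_measure_setIter_le_comp hT hA ENNReal.coe_ne_top hK
  obtain ⟨c, hc⟩ := hθerg.ae_eq_const_of_ae_le_comp (measurable_expGrowthSup hAmeas) hG_le
  refine ⟨-c.toReal, hc.mono fun ω hω => ?_⟩
  rw [(antitone_measure_setIter m ω).limsup_inv_mul_log_toReal (measure_ne_top m _)]
  exact congrArg (fun x : EReal => -x.toReal) hω

/-- If the base transformation `θ` is ergodic and for ℙ-a.e. `ω` the measure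
`m ∘ T_ω⁻¹` has a bounded density with respect to `m`, then for any random set `A` (with
`ω ↦ m(A^{(n)}(ω))` measurable for each `n`) the escape rate
`E(A,ω) = -limsup (1/n) log m(A^{(n)}(ω))` is ℙ-a.e. equal to a constant. -/
theorem escape_rate_ae_constant
    {Ω X : Type*} [MeasurableSpace Ω] [MeasurableSpace X]
    (ℙ : Measure Ω) [IsProbabilityMeasure ℙ]
    (m : Measure X) [IsFiniteMeasure m]
    (θ : Ω → Ω) (hθerg : Ergodic θ ℙ) (hθinv : Function.Bijective θ)
    (T : Ω → X → X) (hT : ∀ ω, Measurable (T ω))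
    (hns : ∀ ω, m.map (T ω) ≪ m)
    (hbd : ∀ᵐ ω ∂ℙ, ∃ K : NNReal,
      ∀ B : Set X, MeasurableSet B → m (T ω ⁻¹' B) ≤ (K : ENNReal) * m B)
    (A : Ω → Set X) (hA : ∀ ω, MeasurableSet (A ω))
    (hAmeas : ∀ n : ℕ, Measurable fun ω => m (setIter θ T A n ω)) :
    ∃ c : ℝ, ∀ᵐ ω ∂ℙ,
      -Filter.limsup
          (fun n : ℕ => (n : ℝ)⁻¹ * Real.log (m (setIter θ T A n ω)).toReal) Filter.atTop
        = c :=
  escape_rate_ae_constant_general ℙ m θ hθerg T hT hbd A hA hAmeas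
end

section
/- (Main Theorem) Fix ω ∈ Ω and suppose there exists f ∈ L^∞(X,m) with λ(ω,f) < 0. Let A₊ and A₋ be the random sets with A₊(θⁿω) = {x ∈ X : (𝓛_ω^{(n)} f)(x) > 0} and A₋(θⁿω) = {x ∈ X : (𝓛_ω^{(n)} f)(x) < 0} for n ≥ 0. Then E(A₊,ω) ≤ −λ(ω,f) and E(A₋,ω) ≤ −λ(ω,f); equivalently, limsup_{n→∞}(1/n) log m(A₊^{(n)}(ω)) ≥ λ(ω,f) and limsup_{n→∞}(1/n) log m(A₋^{(n)}(ω)) ≥ λ(ω,f). -/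
open MeasureTheory Filter

/-- The operator cocycle: `opIter θ L n ω = L_{θ^{n-1}ω} ∘ ⋯ ∘ L_ω`. -/
def opIter {Ω X : Type*} (θ : Ω → Ω) (L : Ω → (X → ℝ) → X → ℝ) :
    ℕ → Ω → (X → ℝ) → X → ℝ
  | 0, _, f => f
  | n + 1, ω, f => opIter θ L n (θ ω) (L ω f)

/-- `A₊^{(n)}(ω)` for the random set `A₊(θ^i ω) = {x : 𝓛_ω^{(i)} f x > 0}`. -/
def plusSetIter {Ω X : Type*} (θ : Ω → Ω) (T : Ω → X → X)
    (L : Ω → (X → ℝ) → X → ℝ) (f : X → ℝ) (n : ℕ) (ω : Ω) : Set X :=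
  ⋂ i ∈ Finset.range n, mapIter θ T i ω ⁻¹' {x | 0 < opIter θ L i ω f x}

/-- `A₋^{(n)}(ω)` for the random set `A₋(θ^i ω) = {x : 𝓛_ω^{(i)} f x < 0}`. -/
def minusSetIter {Ω X : Type*} (θ : Ω → Ω) (T : Ω → X → X)
    (L : Ω → (X → ℝ) → X → ℝ) (f : X → ℝ) (n : ℕ) (ω : Ω) : Set X :=
  ⋂ i ∈ Finset.range n, mapIter θ T i ω ⁻¹' {x | opIter θ L i ω f x < 0}

/-!
Mass is preserved, `∫ 𝓛^{(n)} f = ∫ f`, and `‖𝓛^{(n)} f‖₁ → 0`, so `∫ f = 0` and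
`‖𝓛^{(n)} f‖₁ = 2 ∫ (𝓛^{(n)} f)⁺`. Since `∫_B 𝓛 g = ∫_{T⁻¹B} g`, the positive mass of `𝓛 g` is
carried by `T⁻¹{𝓛 g > 0}`, hence by `{g > 0} ∩ T⁻¹{𝓛 g > 0}`; iterating, `∫ (𝓛^{(n)} f)⁺` is at
most the integral of `f` over a measurable subset of `A₊^{(n+1)}(ω)`, which is bounded by
`‖f‖_∞ m(A₊^{(n)}(ω))`. Taking `(1/n) log` gives the bound for `A₊`; the bound for `A₋` is the
same statement for the cocycle `g ↦ -𝓛(-g)` applied to `-f`.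
-/

section Analysis

open Real Topology

-- `limsup` of a real sequence that is not bounded (or cobounded) above is the junk value `0`.
lemma isBoundedUnder_le_of_limsup_neg {a : ℕ → ℝ} (ha : limsup a atTop < 0) :
    IsBoundedUnder (· ≤ ·) atTop a := by
  by_contra h
  simp [Real.limsup_of_not_isBoundedUnder h] at ha

lemma isCoboundedUnder_le_of_limsup_neg {a : ℕ → ℝ} (ha : limsup a atTop < 0) :
    IsCoboundedUnder (· ≤ ·) atTop a := by
  by_contra h
  simp [Real.limsup_of_not_isCoboundedUnder h] at ha

lemma limsup_le_limsup_of_le_div_add {a b : ℕ → ℝ} {K : ℝ}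
    (ha : IsCoboundedUnder (· ≤ ·) atTop a) (hb : IsBoundedUnder (· ≤ ·) atTop b)
    (hab : ∀ᶠ n in atTop, a n ≤ K / n + b n) :
    limsup a atTop ≤ limsup b atTop := by
  refine le_of_forall_pos_le_add fun ε hε => limsup_le_of_le ha ?_
  filter_upwards [hab, eventually_lt_of_limsup_lt (lt_add_of_pos_right _ (half_pos hε)) hb,
    (tendsto_const_div_atTop_nhds_zero_nat K).eventually_lt_const (half_pos hε)]
    with n h₁ h₂ h₃
  linarith

lemma tendsto_zero_of_limsup_inv_mul_log_neg {u : ℕ → ℝ} (hu₀ : ∀ n, 0 ≤ u n)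
    (hu : limsup (fun n : ℕ => (n : ℝ)⁻¹ * log (u n)) atTop < 0) :
    Tendsto u atTop (𝓝 0) := by
  obtain ⟨c, hlim, hc⟩ := exists_between hu
  have hexp : Tendsto (fun n : ℕ => exp c ^ n) atTop (𝓝 0) :=
    tendsto_pow_atTop_nhds_zero_of_lt_one (exp_pos c).le (exp_lt_one_iff.mpr hc)
  refine squeeze_zero' (Eventually.of_forall hu₀) ?_ hexp
  filter_upwards [eventually_lt_of_limsup_lt hlim (isBoundedUnder_le_of_limsup_neg hu),
    eventually_gt_atTop 0] with n hn hn₀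
  rcases (hu₀ n).eq_or_lt with h | h
  · rw [← h]
    positivity
  · rw [← exp_nat_mul]
    refine ((log_lt_iff_lt_exp h).mp ?_).le
    rwa [inv_mul_lt_iff₀ (by exact_mod_cast hn₀)] at hn

lemma limsup_inv_mul_log_le_of_le_const_mul {u v : ℕ → ℝ} {K : ℝ} (hu₀ : ∀ n, 0 ≤ u n)
    (hu : limsup (fun n : ℕ => (n : ℝ)⁻¹ * log (u n)) atTop < 0)
    (hv : IsBoundedUnder (· ≤ ·) atTop fun n : ℕ => (n : ℝ)⁻¹ * log (v n))
    (huv : ∀ n, u n ≤ K * v n) :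
    limsup (fun n : ℕ => (n : ℝ)⁻¹ * log (u n)) atTop
      ≤ limsup (fun n : ℕ => (n : ℝ)⁻¹ * log (v n)) atTop := by
  refine limsup_le_limsup_of_le_div_add (K := log K) (isCoboundedUnder_le_of_limsup_neg hu) hv ?_
  filter_upwards [eventually_lt_of_limsup_lt hu (isBoundedUnder_le_of_limsup_neg hu)] with n hn
  have hun : 0 < u n := (hu₀ n).lt_of_ne fun h => by simp [← h] at hn
  have hKv : K * v n ≠ 0 := (hun.trans_le (huv n)).ne'
  calc (n : ℝ)⁻¹ * log (u n) ≤ (n : ℝ)⁻¹ * (log K + log (v n)) := by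
        rw [← log_mul (left_ne_zero_of_mul hKv) (right_ne_zero_of_mul hKv)]
        gcongr
        exact huv n
    _ = log K / n + (n : ℝ)⁻¹ * log (v n) := by ring

lemma isBoundedUnder_inv_mul_log_measureReal {X : Type*} [MeasurableSpace X] (m : Measure X)
    [IsFiniteMeasure m] (s : ℕ → Set X) :
    IsBoundedUnder (· ≤ ·) atTop fun n : ℕ => (n : ℝ)⁻¹ * log (m (s n)).toReal := by
  refine isBoundedUnder_of ⟨(m Set.univ).toReal, fun n => ?_⟩
  have hs : 0 ≤ (m (s n)).toReal := ENNReal.toReal_nonneg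
  calc (n : ℝ)⁻¹ * log (m (s n)).toReal ≤ (n : ℝ)⁻¹ * (m (s n)).toReal := by
        gcongr
        exact log_le_self hs
    _ ≤ (m (s n)).toReal := mul_le_of_le_one_left hs (Nat.cast_inv_le_one n)
    _ ≤ (m Set.univ).toReal :=
        ENNReal.toReal_mono (measure_ne_top m _) (measure_mono (Set.subset_univ _))

end Analysis

section SetIntegral

variable {Ω X : Type*} [MeasurableSpace X] {m : Measure X}

lemma exists_measurableSet_subset_setIntegral_max_eq {A : Set X} (hA : MeasurableSet A)
    {g : X → ℝ} (hg : Integrable g m) :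
    ∃ S : Set X, MeasurableSet S ∧ S ⊆ A ∩ {x | 0 < g x} ∧
      ∫ x in A, max (g x) 0 ∂m = ∫ x in S, g x ∂m := by
  obtain ⟨S, hSsub, hS, hSae⟩ :=
    (hA.nullMeasurableSet.inter (nullMeasurableSet_lt aemeasurable_const hg.aemeasurable))
      |>.exists_measurable_subset_ae_eq
  refine ⟨S, hS, hSsub, ?_⟩
  calc ∫ x in A, max (g x) 0 ∂m = ∫ x in A, (A ∩ {x | 0 < g x}).indicator g x ∂m := by
        refine setIntegral_congr_fun hA fun x hx => ?_
        by_cases hgx : 0 < g x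
        · simp [hx, hgx, hgx.le]
        · simp [hgx, not_lt.mp hgx]
    _ = ∫ x in A, S.indicator g x ∂m :=
        integral_congr_ae (ae_restrict_of_ae (indicator_ae_eq_of_ae_eq_set hSae.symm))
    _ = ∫ x in S, g x ∂m := by
        rw [setIntegral_indicator hS, Set.inter_eq_right.mpr fun x hx => (hSsub hx).1]

lemma integral_abs_eq_two_mul_integral_max_sub {g : X → ℝ} (hg : Integrable g m) :
    ∫ x, |g x| ∂m = 2 * ∫ x, max (g x) 0 ∂m - ∫ x, g x ∂m := by
  rw [← integral_const_mul, ← integral_sub (hg.pos_part.const_mul 2) hg]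
  refine integral_congr_ae (Eventually.of_forall fun x => ?_)
  have := max_zero_add_max_neg_zero_eq_abs_self (g x)
  have := max_zero_sub_eq_self (g x)
  linarith

end SetIntegral

section SetIter

variable {Ω X : Type*} {θ : Ω → Ω} {T : Ω → X → X} {L : Ω → (X → ℝ) → X → ℝ}

lemma plusSetIter_succ (f : X → ℝ) (n : ℕ) (ω : Ω) :
    plusSetIter θ T L f (n + 1) ω
      = {x | 0 < f x} ∩ T ω ⁻¹' plusSetIter θ T L (L ω f) n (θ ω) := by
  ext x
  simp only [plusSetIter, Set.mem_iInter, Finset.mem_range, Set.mem_inter_iff,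
    Set.mem_preimage, Nat.forall_lt_succ_left]
  rfl

lemma plusSetIter_succ_subset (f : X → ℝ) (n : ℕ) (ω : Ω) :
    plusSetIter θ T L f (n + 1) ω ⊆ plusSetIter θ T L f n ω :=
  Set.biInter_subset_biInter_left <|
    Finset.coe_subset.mpr (Finset.range_subset_range.mpr n.le_succ)

end SetIter

structure IsPerronFrobeniusCocycle {Ω X : Type*} [MeasurableSpace X] (m : Measure X)
    (T : Ω → X → X) (L : Ω → (X → ℝ) → X → ℝ) : Prop where
  integrable : ∀ ω g, Integrable g m → Integrable (L ω g) m
  setIntegral_eq : ∀ ω g, Integrable g m → ∀ B, MeasurableSet B →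
    ∫ x in B, L ω g x ∂m = ∫ x in T ω ⁻¹' B, g x ∂m

namespace IsPerronFrobeniusCocycle

variable {Ω X : Type*} [MeasurableSpace X] {m : Measure X} {θ : Ω → Ω} {T : Ω → X → X}
  {L : Ω → (X → ℝ) → X → ℝ}

lemma integral_eq (hL : IsPerronFrobeniusCocycle m T L) (ω : Ω) {g : X → ℝ}
    (hg : Integrable g m) : ∫ x, L ω g x ∂m = ∫ x, g x ∂m := by
  simpa using hL.setIntegral_eq ω g hg Set.univ MeasurableSet.univ

lemma integrable_opIter (hL : IsPerronFrobeniusCocycle m T L) :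
    ∀ (n : ℕ) (ω : Ω) {g : X → ℝ}, Integrable g m → Integrable (opIter θ L n ω g) m
  | 0, _, _, hg => hg
  | n + 1, ω, g, hg => hL.integrable_opIter n (θ ω) (hL.integrable ω g hg)

lemma integral_opIter (hL : IsPerronFrobeniusCocycle m T L) :
    ∀ (n : ℕ) (ω : Ω) {g : X → ℝ}, Integrable g m →
      ∫ x, opIter θ L n ω g x ∂m = ∫ x, g x ∂m
  | 0, _, _, _ => rfl
  | n + 1, ω, g, hg =>
      (hL.integral_opIter n (θ ω) (hL.integrable ω g hg)).trans (hL.integral_eq ω hg)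

lemma exists_subset_plusSetIter_integral_max_opIter_le (hL : IsPerronFrobeniusCocycle m T L)
    (hT : ∀ ω, Measurable (T ω)) :
    ∀ (n : ℕ) (ω : Ω) {g : X → ℝ}, Integrable g m →
      ∃ S : Set X, MeasurableSet S ∧ S ⊆ plusSetIter θ T L g (n + 1) ω ∧
        ∫ x, max (opIter θ L n ω g x) 0 ∂m ≤ ∫ x in S, g x ∂m
  | 0, ω, g, hg => by
      obtain ⟨S, hS, hSsub, hSeq⟩ := exists_measurableSet_subset_setIntegral_max_eq .univ hg
      refine ⟨S, hS, fun x hx => ?_, by simpa [opIter] using hSeq.le⟩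
      simpa [plusSetIter, opIter, mapIter] using (hSsub hx).2
  | n + 1, ω, g, hg => by
      obtain ⟨S₁, hS₁, hS₁sub, hS₁le⟩ :=
        hL.exists_subset_plusSetIter_integral_max_opIter_le hT n (θ ω) (hL.integrable ω g hg)
      obtain ⟨S, hS, hSsub, hSeq⟩ :=
        exists_measurableSet_subset_setIntegral_max_eq (hS₁.preimage (hT ω)) hg
      refine ⟨S, hS, fun x hx => ?_, ?_⟩
      · rw [plusSetIter_succ]
        exact ⟨(hSsub hx).2, hS₁sub (hSsub hx).1⟩
      calc ∫ x, max (opIter θ L (n + 1) ω g x) 0 ∂m ≤ ∫ x in S₁, L ω g x ∂m := hS₁le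
        _ = ∫ x in T ω ⁻¹' S₁, g x ∂m := hL.setIntegral_eq ω g hg S₁ hS₁
        _ ≤ ∫ x in T ω ⁻¹' S₁, max (g x) 0 ∂m :=
            integral_mono hg.integrableOn hg.pos_part.integrableOn fun x => le_max_left _ _
        _ = ∫ x in S, g x ∂m := hSeq

variable [IsFiniteMeasure m]

lemma integral_abs_opIter_le_mul_measure (hL : IsPerronFrobeniusCocycle m T L)
    (hT : ∀ ω, Measurable (T ω)) {f : X → ℝ} (hf : Integrable f m) (hfinf : MemLp f ⊤ m)
    (hf₀ : ∫ x, f x ∂m = 0) (ω : Ω) (n : ℕ) :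
    ∫ x, |opIter θ L n ω f x| ∂m
      ≤ 2 * lpNorm f ⊤ m * (m (plusSetIter θ T L f n ω)).toReal := by
  obtain ⟨S, hS, hSsub, hSle⟩ := hL.exists_subset_plusSetIter_integral_max_opIter_le hT n ω hf
  have hfS : ∫ x in S, f x ∂m ≤ lpNorm f ⊤ m * (m S).toReal :=
    (le_abs_self _).trans <| norm_setIntegral_le_of_norm_le_const_ae' (measure_lt_top m S)
      ((ae_le_lpNorm_exponent_top hfinf).mono fun x hx _ => hx)
  have hmS : (m S).toReal ≤ (m (plusSetIter θ T L f n ω)).toReal :=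
    ENNReal.toReal_mono (measure_ne_top m _)
      (measure_mono (hSsub.trans (plusSetIter_succ_subset f n ω)))
  rw [integral_abs_eq_two_mul_integral_max_sub (hL.integrable_opIter n ω hf),
    hL.integral_opIter n ω hf, hf₀, sub_zero, mul_assoc]
  gcongr 2 * ?_
  calc ∫ x, max (opIter θ L n ω f x) 0 ∂m ≤ ∫ x in S, f x ∂m := hSle
    _ ≤ lpNorm f ⊤ m * (m S).toReal := hfS
    _ ≤ lpNorm f ⊤ m * (m (plusSetIter θ T L f n ω)).toReal :=
        mul_le_mul_of_nonneg_left hmS lpNorm_nonneg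

theorem limsup_log_integral_abs_opIter_le_limsup_log_measure_plusSetIter
    (hL : IsPerronFrobeniusCocycle m T L) (hT : ∀ ω, Measurable (T ω)) {f : X → ℝ}
    (hf : Integrable f m) (hfinf : MemLp f ⊤ m) {ω : Ω}
    (hlyap : limsup (fun n : ℕ => (n : ℝ)⁻¹ * Real.log (∫ x, |opIter θ L n ω f x| ∂m)) atTop
      < 0) :
    limsup (fun n : ℕ => (n : ℝ)⁻¹ * Real.log (∫ x, |opIter θ L n ω f x| ∂m)) atTop
      ≤ limsup (fun n : ℕ => (n : ℝ)⁻¹ * Real.log (m (plusSetIter θ T L f n ω)).toReal)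
        atTop := by
  have hu₀ : ∀ n, 0 ≤ ∫ x, |opIter θ L n ω f x| ∂m :=
    fun n => integral_nonneg fun x => abs_nonneg _
  have hf₀ : ∫ x, f x ∂m = 0 := by
    refine abs_nonpos_iff.mp <|
      ge_of_tendsto' (tendsto_zero_of_limsup_inv_mul_log_neg hu₀ hlyap) fun n => ?_
    rw [← hL.integral_opIter n ω hf]
    exact abs_integral_le_integral_abs
  exact limsup_inv_mul_log_le_of_le_const_mul hu₀ hlyap
    (isBoundedUnder_inv_mul_log_measureReal m _)
    (hL.integral_abs_opIter_le_mul_measure hT hf hfinf hf₀ ω)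

end IsPerronFrobeniusCocycle

/-- For linear `L` this is `L` itself, but `L` is not assumed linear. -/
def negConj {Ω X : Type*} (L : Ω → (X → ℝ) → X → ℝ) : Ω → (X → ℝ) → X → ℝ :=
  fun ω g => -L ω (-g)

section NegConj

variable {Ω X : Type*} {θ : Ω → Ω} {T : Ω → X → X} {L : Ω → (X → ℝ) → X → ℝ}

lemma opIter_negConj : ∀ (n : ℕ) (ω : Ω) (g : X → ℝ),
    opIter θ (negConj L) n ω (-g) = -opIter θ L n ω g
  | 0, _, _ => rfl
  | n + 1, ω, g => by
      simp only [opIter, negConj, neg_neg]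
      exact opIter_negConj n (θ ω) (L ω g)

lemma minusSetIter_eq_plusSetIter_negConj (f : X → ℝ) (n : ℕ) (ω : Ω) :
    minusSetIter θ T L f n ω = plusSetIter θ T (negConj L) (-f) n ω := by
  simp [minusSetIter, plusSetIter, opIter_negConj]

lemma IsPerronFrobeniusCocycle.negConj [MeasurableSpace X] {m : Measure X}
    (hL : IsPerronFrobeniusCocycle m T L) : IsPerronFrobeniusCocycle m T (negConj L) where
  integrable ω g hg := (hL.integrable ω _ hg.neg).neg
  setIntegral_eq ω g hg B hB := by
    simp [_root_.negConj, integral_neg, hL.setIntegral_eq ω _ hg.neg B hB]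

end NegConj

/-- **Main Theorem.** Fix `ω` and suppose `f ∈ L^∞(X,m)` has `λ(ω,f) < 0`.
With `A₊(θⁿω) = {𝓛_ω^{(n)} f > 0}` and `A₋(θⁿω) = {𝓛_ω^{(n)} f < 0}` one has
`E(A₊,ω) ≤ -λ(ω,f)` and `E(A₋,ω) ≤ -λ(ω,f)`; equivalently
`limsup (1/n) log m(A₊^{(n)}(ω)) ≥ λ(ω,f)` and `limsup (1/n) log m(A₋^{(n)}(ω)) ≥ λ(ω,f)`. -/
theorem escape_rate_le_neg_lyapunov
    {Ω X : Type*} [MeasurableSpace X]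
    (m : Measure X) [IsFiniteMeasure m]
    (θ : Ω → Ω) (T : Ω → X → X) (hT : ∀ ω', Measurable (T ω'))
    (L : Ω → (X → ℝ) → X → ℝ)
    (hLint : ∀ ω' (g : X → ℝ), Integrable g m → Integrable (L ω' g) m)
    (hL : ∀ ω' (g : X → ℝ), Integrable g m → ∀ B : Set X, MeasurableSet B →
      ∫ x in B, L ω' g x ∂m = ∫ x in T ω' ⁻¹' B, g x ∂m)
    (ω : Ω) (f : X → ℝ) (hf : Integrable f m) (hfinf : MemLp f ⊤ m)
    (hlyap : Filter.limsup
        (fun n : ℕ => (n : ℝ)⁻¹ * Real.log (∫ x, |opIter θ L n ω f x| ∂m)) Filter.atTop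
      < 0) :
    (-Filter.limsup
        (fun n : ℕ => (n : ℝ)⁻¹ * Real.log (m (plusSetIter θ T L f n ω)).toReal)
        Filter.atTop
      ≤ -Filter.limsup
        (fun n : ℕ => (n : ℝ)⁻¹ * Real.log (∫ x, |opIter θ L n ω f x| ∂m)) Filter.atTop) ∧
    (-Filter.limsup
        (fun n : ℕ => (n : ℝ)⁻¹ * Real.log (m (minusSetIter θ T L f n ω)).toReal)
        Filter.atTop
      ≤ -Filter.limsup
        (fun n : ℕ => (n : ℝ)⁻¹ * Real.log (∫ x, |opIter θ L n ω f x| ∂m)) Filter.atTop) := by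
  have hPF : IsPerronFrobeniusCocycle m T L := ⟨hLint, hL⟩
  refine ⟨neg_le_neg (hPF.limsup_log_integral_abs_opIter_le_limsup_log_measure_plusSetIter
    hT hf hfinf hlyap), neg_le_neg ?_⟩
  simp_rw [minusSetIter_eq_plusSetIter_negConj]
  simpa [opIter_negConj] using
    hPF.negConj.limsup_log_integral_abs_opIter_le_limsup_log_measure_plusSetIter hT hf.neg
      hfinf.neg (by simpa [opIter_negConj] using hlyap)
end

section
/- Suppose h : Ω → L^∞(X,m) satisfies δ ≤ h_ω ≤ H m-almost everywhere for constants 0 < δ ≤ H < ∞ and 𝓛_ω h_ω = h_{θω} for almost every ω (a preserved positive random density), and suppose g : Ω → L^∞(X,m) satisfies ‖g_ω‖_{L^∞} ≤ G for all ω and 𝓛_ω g_ω = 0 for almost every ω. Let ρ < 0. Then for each ω the series f_ω := Σ_{n=0}^∞ e^{ρn} ((g_{θⁿω}/h_{θⁿω}) ∘ T_ω^{(n)}) · h_ω converges absolutely in L^∞(X,m), and 𝓛_ω f_ω = e^{ρ} f_{θω} for almost every ω. -/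
/-!
With `ψ_ω = g_ω / h_ω` the series is `f_ω = S_ω · h_ω`, where
`S_ω = ∑ₙ e^{ρn} ψ_{θⁿω} ∘ T_ω^{(n)}`. Each `T_ω` is nonsingular (test the duality on `𝟙`), so the
bound `|ψ| ≤ G / δ` survives composition with the cocycle and the terms are dominated by a
geometric series. Splitting off the first term gives `S_ω = ψ_ω + e^ρ S_{θω} ∘ T_ω`, i.e.
`f_ω = g_ω + e^ρ (S_{θω} ∘ T_ω) h_ω`. Under `𝓛_ω` the first summand vanishes, and since `T_ω`
pushes `h_ω m` forward to `𝓛_ω h_ω · m = h_{θω} m`, the second becomes `e^ρ S_{θω} h_{θω} = e^ρ f_{θω}`.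
-/

open MeasureTheory Filter

def IsPerronFrobenius {X : Type*} [MeasurableSpace X] (m : Measure X) (T : X → X)
    (L : (X → ℝ) → X → ℝ) : Prop :=
  ∀ f : X → ℝ, Integrable f m → ∀ B : Set X, MeasurableSet B →
    ∫ x in B, L f x ∂m = ∫ x in T ⁻¹' B, f x ∂m

section PerronFrobenius

variable {X : Type*} [MeasurableSpace X] {m : Measure X} {T : X → X} {L : (X → ℝ) → X → ℝ}

namespace IsPerronFrobenius

theorem measure_preimage_eq_zero [IsFiniteMeasure m] (hPF : IsPerronFrobenius m T L)
    {B : Set X} (hB : MeasurableSet B) (hB0 : m B = 0) : m (T ⁻¹' B) = 0 := by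
  have h := hPF (fun _ => 1) (integrable_const 1) B hB
  rw [Measure.restrict_eq_zero.mpr hB0, integral_zero_measure, setIntegral_const, smul_eq_mul,
    mul_one, eq_comm, measureReal_eq_zero_iff] at h
  exact h

theorem quasiMeasurePreserving [IsFiniteMeasure m] (hPF : IsPerronFrobenius m T L)
    (hT : Measurable T) : Measure.QuasiMeasurePreserving T m m :=
  ⟨hT, .mk fun _ hB hB0 => by
    rw [Measure.map_apply hT hB]; exact hPF.measure_preimage_eq_zero hB hB0⟩

theorem ae_eq_of_forall_setIntegral_preimage_eq [IsFiniteMeasure m]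
    (hPF : IsPerronFrobenius m T L) {f u : X → ℝ} (hf : Integrable f m)
    (hLf : Integrable (L f) m) (hu : Integrable u m)
    (h : ∀ B : Set X, MeasurableSet B → ∫ x in T ⁻¹' B, f x ∂m = ∫ x in B, u x ∂m) :
    L f =ᵐ[m] u :=
  ae_eq_of_forall_setIntegral_eq_of_sigmaFinite (fun _ _ _ => hLf.integrableOn)
    (fun _ _ _ => hu.integrableOn) fun B hB _ => (hPF f hf B hB).trans (h B hB)

theorem map_withDensity (hPF : IsPerronFrobenius m T L) (hT : Measurable T) {f f' : X → ℝ}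
    (hf : Integrable f m) (hf0 : 0 ≤ᵐ[m] f) (hf' : Integrable f' m) (hf'0 : 0 ≤ᵐ[m] f')
    (hLf : L f =ᵐ[m] f') :
    (m.withDensity fun x => ENNReal.ofReal (f x)).map T =
      m.withDensity fun x => ENNReal.ofReal (f' x) := by
  ext B hB
  rw [Measure.map_apply hT hB, withDensity_apply _ (hT hB), withDensity_apply _ hB,
    ← ofReal_integral_eq_lintegral_ofReal hf.integrableOn (ae_restrict_of_ae hf0),
    ← ofReal_integral_eq_lintegral_ofReal hf'.integrableOn (ae_restrict_of_ae hf'0),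
    ← hPF f hf B hB, setIntegral_congr_ae hB (hLf.mono fun _ hx _ => hx)]

theorem setIntegral_preimage_comp_mul (hPF : IsPerronFrobenius m T L) (hT : Measurable T)
    {f f' φ : X → ℝ} (hfm : Measurable f) (hf'm : Measurable f') (hf : Integrable f m)
    (hf0 : 0 ≤ᵐ[m] f) (hf' : Integrable f' m) (hf'0 : 0 ≤ᵐ[m] f') (hLf : L f =ᵐ[m] f')
    (hφ : AEStronglyMeasurable φ m) {B : Set X} (hB : MeasurableSet B) :
    ∫ x in T ⁻¹' B, φ (T x) * f x ∂m = ∫ y in B, φ y * f' y ∂m := by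
  have hmap := hPF.map_withDensity hT hf hf0 hf' hf'0 hLf
  have hac : (m.withDensity fun x => ENNReal.ofReal (f x)).map T ≪ m :=
    hmap ▸ withDensity_absolutelyContinuous m _
  calc ∫ x in T ⁻¹' B, φ (T x) * f x ∂m
      = ∫ x in T ⁻¹' B, φ (T x) ∂m.withDensity fun x => ENNReal.ofReal (f x) := by
        rw [setIntegral_withDensity_eq_setIntegral_toReal_smul hfm.ennreal_ofReal
          (ae_of_all _ fun _ => ENNReal.ofReal_lt_top) _ (hT hB)]
        refine setIntegral_congr_ae (hT hB) (hf0.mono fun x hx _ => ?_)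
        rw [ENNReal.toReal_ofReal hx, smul_eq_mul, mul_comm]
    _ = ∫ y in B, φ y ∂(m.withDensity fun x => ENNReal.ofReal (f x)).map T :=
        (setIntegral_map hB (hφ.mono_ac hac) hT.aemeasurable).symm
    _ = ∫ y in B, φ y * f' y ∂m := by
        rw [hmap, setIntegral_withDensity_eq_setIntegral_toReal_smul hf'm.ennreal_ofReal
          (ae_of_all _ fun _ => ENNReal.ofReal_lt_top) _ hB]
        refine setIntegral_congr_ae hB (hf'0.mono fun x hx _ => ?_)
        rw [ENNReal.toReal_ofReal hx, smul_eq_mul, mul_comm]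

theorem ae_eq_const_mul_of_eq_div_add_comp [IsFiniteMeasure m] (hPF : IsPerronFrobenius m T L)
    (hT : Measurable T) (hLint : ∀ f : X → ℝ, Integrable f m → Integrable (L f) m)
    {h₀ h₁ g u v : X → ℝ} {H M c : ℝ} (hh₀ : Measurable h₀) (hh₁ : Measurable h₁)
    (hh₀bd : ∀ᵐ x ∂m, 0 < h₀ x ∧ h₀ x ≤ H) (hh₁bd : ∀ᵐ x ∂m, 0 ≤ h₁ x ∧ h₁ x ≤ H)
    (hLh : L h₀ =ᵐ[m] h₁) (hg : Integrable g m) (hLg : L g =ᵐ[m] fun _ => 0)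
    (hu : AEStronglyMeasurable u m) (hv : AEStronglyMeasurable v m)
    (hubd : ∀ᵐ x ∂m, |u x| ≤ M) (hvbd : ∀ᵐ x ∂m, |v x| ≤ M)
    (hrec : ∀ᵐ x ∂m, u x = g x / h₀ x + c * v (T x)) :
    L (fun x => u x * h₀ x) =ᵐ[m] fun x => c * (v x * h₁ x) := by
  have hqmp := hPF.quasiMeasurePreserving hT
  have hh₀int : Integrable h₀ m := .of_bound hh₀.aestronglyMeasurable H
    (hh₀bd.mono fun _ hx => (Real.norm_of_nonneg hx.1.le).trans_le hx.2)
  have hh₁int : Integrable h₁ m := .of_bound hh₁.aestronglyMeasurable H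
    (hh₁bd.mono fun _ hx => (Real.norm_of_nonneg hx.1).trans_le hx.2)
  have huh : Integrable (fun x => u x * h₀ x) m := hh₀int.bdd_mul hu hubd
  have hvTh : Integrable (fun x => v (T x) * h₀ x) m :=
    hh₀int.bdd_mul (hv.comp_quasiMeasurePreserving hqmp) (hqmp.ae hvbd)
  have hvh : Integrable (fun x => v x * h₁ x) m := hh₁int.bdd_mul hv hvbd
  have hsplit : (fun x => u x * h₀ x) =ᵐ[m] fun x => g x + c * (v (T x) * h₀ x) := by
    filter_upwards [hrec, hh₀bd] with x hx hx₀
    rw [hx, add_mul, div_mul_cancel₀ _ hx₀.1.ne', mul_assoc]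
  refine hPF.ae_eq_of_forall_setIntegral_preimage_eq huh (hLint _ huh) (hvh.const_mul c)
    fun B hB => ?_
  calc ∫ x in T ⁻¹' B, u x * h₀ x ∂m
      = ∫ x in T ⁻¹' B, g x ∂m + c * ∫ x in T ⁻¹' B, v (T x) * h₀ x ∂m := by
        rw [setIntegral_congr_ae (hT hB) (hsplit.mono fun _ hx _ => hx),
          integral_add hg.integrableOn (hvTh.const_mul c).integrableOn, integral_const_mul]
    _ = ∫ x in B, L g x ∂m + c * ∫ y in B, v y * h₁ y ∂m := by
        rw [hPF g hg B hB, hPF.setIntegral_preimage_comp_mul hT hh₀ hh₁ hh₀int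
          (hh₀bd.mono fun _ hx => hx.1.le) hh₁int (hh₁bd.mono fun _ hx => hx.1) hLh hv hB]
    _ = ∫ y in B, c * (v y * h₁ y) ∂m := by
        rw [setIntegral_congr_ae hB (hLg.mono fun _ hx _ => hx), integral_zero, zero_add,
          integral_const_mul]

end IsPerronFrobenius

end PerronFrobenius

theorem tsum_eLpNorm_top_lt_top {α E : Type*} [MeasurableSpace α] [NormedAddCommGroup E]
    {μ : Measure α} {f : ℕ → α → E} {a : ℕ → ℝ} (ha : Summable a)
    (hf : ∀ n, ∀ᵐ x ∂μ, ‖f n x‖ ≤ a n) : ∑' n, eLpNorm (f n) ⊤ μ < ⊤ :=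
  calc ∑' n, eLpNorm (f n) ⊤ μ
      ≤ ∑' n, ENNReal.ofReal |a n| := ENNReal.tsum_le_tsum fun n => by
        rw [eLpNorm_exponent_top]
        exact eLpNormEssSup_le_of_ae_bound ((hf n).mono fun _ hx => hx.trans (le_abs_self _))
    _ = ENNReal.ofReal (∑' n, |a n|) :=
        (ENNReal.ofReal_tsum_of_nonneg (fun _ => abs_nonneg _) ha.abs).symm
    _ < ⊤ := ENNReal.ofReal_lt_top

theorem summable_exp_mul_const {ρ : ℝ} (hρ : ρ < 0) (K : ℝ) :
    Summable fun n : ℕ => Real.exp (ρ * n) * K :=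
  ((Real.summable_exp_nat_mul_iff.2 hρ).mul_right K).congr fun n => by rw [mul_comm (n : ℝ) ρ]

section Cocycle

variable {Ω X : Type*} (ρ : ℝ) (θ : Ω → Ω) (T : Ω → X → X) (ψ : Ω → X → ℝ)

noncomputable def discountedTerm (ω : Ω) (n : ℕ) (x : X) : ℝ :=
  Real.exp (ρ * n) * ψ (θ^[n] ω) (mapIter θ T n ω x)

noncomputable def discountedSum (ω : Ω) (x : X) : ℝ :=
  ∑' n, discountedTerm ρ θ T ψ ω n x

theorem discountedTerm_succ (ω : Ω) (n : ℕ) (x : X) :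
    discountedTerm ρ θ T ψ ω (n + 1) x = Real.exp ρ * discountedTerm ρ θ T ψ (θ ω) n (T ω x) := by
  simp only [discountedTerm, mapIter, Function.iterate_succ_apply, Nat.cast_succ, mul_add,
    mul_one, Real.exp_add]
  ring

variable {ρ θ T ψ}

theorem abs_discountedTerm_le {ω : Ω} {n : ℕ} {x : X} {K : ℝ}
    (hψ : |ψ (θ^[n] ω) (mapIter θ T n ω x)| ≤ K) :
    |discountedTerm ρ θ T ψ ω n x| ≤ Real.exp (ρ * n) * K := by
  rw [discountedTerm, abs_mul, abs_of_pos (Real.exp_pos _)]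
  exact mul_le_mul_of_nonneg_left hψ (Real.exp_pos _).le

section Pointwise

variable {ω : Ω} {x : X} {K : ℝ}

theorem summable_discountedTerm (hρ : ρ < 0)
    (hψ : ∀ n, |ψ (θ^[n] ω) (mapIter θ T n ω x)| ≤ K) :
    Summable fun n => discountedTerm ρ θ T ψ ω n x :=
  (summable_exp_mul_const hρ K).of_norm_bounded fun n => abs_discountedTerm_le (hψ n)

theorem abs_discountedSum_le (hρ : ρ < 0) (hψ : ∀ n, |ψ (θ^[n] ω) (mapIter θ T n ω x)| ≤ K) :
    |discountedSum ρ θ T ψ ω x| ≤ ∑' n : ℕ, Real.exp (ρ * n) * K :=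
  tsum_of_norm_bounded (f := fun n => discountedTerm ρ θ T ψ ω n x)
    (summable_exp_mul_const hρ K).hasSum fun n => abs_discountedTerm_le (hψ n)

theorem discountedSum_eq_add (hρ : ρ < 0) (hψ : ∀ n, |ψ (θ^[n] ω) (mapIter θ T n ω x)| ≤ K) :
    discountedSum ρ θ T ψ ω x = ψ ω x + Real.exp ρ * discountedSum ρ θ T ψ (θ ω) (T ω x) := by
  rw [discountedSum, (summable_discountedTerm hρ hψ).tsum_eq_zero_add]
  simp only [discountedTerm_succ, tsum_mul_left]
  simp [discountedTerm, mapIter, discountedSum]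

end Pointwise

variable [MeasurableSpace X] {m : Measure X}

theorem quasiMeasurePreserving_mapIter (hT : ∀ ω, Measure.QuasiMeasurePreserving (T ω) m m) :
    ∀ n ω, Measure.QuasiMeasurePreserving (mapIter θ T n ω) m m
  | 0, _ => Measure.QuasiMeasurePreserving.id m
  | n + 1, ω => (quasiMeasurePreserving_mapIter hT n (θ ω)).comp (hT ω)

theorem ae_forall_mapIter (hT : ∀ ω, Measure.QuasiMeasurePreserving (T ω) m m)
    {P : Ω → X → Prop} (hP : ∀ ω, ∀ᵐ x ∂m, P ω x) (ω : Ω) :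
    ∀ᵐ x ∂m, ∀ n, P (θ^[n] ω) (mapIter θ T n ω x) :=
  ae_all_iff.2 fun n => (quasiMeasurePreserving_mapIter hT n ω).ae (hP _)

theorem measurable_discountedSum (hT : ∀ ω, Measure.QuasiMeasurePreserving (T ω) m m)
    (hψ : ∀ ω, Measurable (ψ ω)) (ω : Ω) : Measurable (discountedSum ρ θ T ψ ω) :=
  Measurable.tsum fun n =>
    measurable_const.mul ((hψ _).comp (quasiMeasurePreserving_mapIter hT n ω).measurable)

theorem tsum_eLpNorm_discountedTerm_mul_lt_top
    (hT : ∀ ω, Measure.QuasiMeasurePreserving (T ω) m m) (hρ : ρ < 0) {K H : ℝ}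
    (hψ : ∀ ω, ∀ᵐ x ∂m, |ψ ω x| ≤ K) {f : X → ℝ} (hf : ∀ᵐ x ∂m, |f x| ≤ H) (ω : Ω) :
    ∑' n, eLpNorm (fun x => discountedTerm ρ θ T ψ ω n x * f x) ⊤ m < ⊤ :=
  tsum_eLpNorm_top_lt_top ((summable_exp_mul_const hρ K).mul_right H) fun n => by
    filter_upwards [(quasiMeasurePreserving_mapIter hT n ω).ae (hψ _), hf] with x hx hfx
    rw [Real.norm_eq_abs, abs_mul]
    exact mul_le_mul (abs_discountedTerm_le hx) hfx (abs_nonneg _)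
      (mul_nonneg (Real.exp_pos _).le ((abs_nonneg _).trans hx))

end Cocycle

theorem series_eigenfunction_construction_general
    {Ω X : Type*} [MeasurableSpace Ω] [MeasurableSpace X]
    (ℙ : Measure Ω)
    (m : Measure X) [IsFiniteMeasure m]
    (θ : Ω → Ω)
    (T : Ω → X → X) (hT : ∀ ω, Measurable (T ω))
    (L : Ω → (X → ℝ) → X → ℝ)
    (hLint : ∀ ω (g : X → ℝ), Integrable g m → Integrable (L ω g) m)
    (hL : ∀ ω (g : X → ℝ), Integrable g m → ∀ B : Set X, MeasurableSet B →
      ∫ x in B, L ω g x ∂m = ∫ x in T ω ⁻¹' B, g x ∂m)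
    (h g : Ω → X → ℝ)
    (hhmeas : ∀ ω, Measurable (h ω)) (hgmeas : ∀ ω, Measurable (g ω))
    (δ H G : ℝ) (hδ : 0 < δ)
    (hhbd : ∀ ω, ∀ᵐ x ∂m, δ ≤ h ω x ∧ h ω x ≤ H)
    (hpres : ∀ᵐ ω ∂ℙ, L ω (h ω) =ᵐ[m] h (θ ω))
    (hgbd : ∀ ω, ∀ᵐ x ∂m, |g ω x| ≤ G)
    (hgzero : ∀ᵐ ω ∂ℙ, L ω (g ω) =ᵐ[m] fun _ => (0 : ℝ))
    (ρ : ℝ) (hρ : ρ < 0)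
    (F : Ω → X → ℝ)
    (hF : ∀ ω x, F ω x = ∑' n : ℕ,
      Real.exp (ρ * n) *
        (g (θ^[n] ω) (mapIter θ T n ω x) / h (θ^[n] ω) (mapIter θ T n ω x)) * h ω x) :
    (∀ ω, (∑' n : ℕ, eLpNorm
        (fun x => Real.exp (ρ * n) *
          (g (θ^[n] ω) (mapIter θ T n ω x) / h (θ^[n] ω) (mapIter θ T n ω x)) * h ω x)
        ⊤ m) < ⊤) ∧
    (∀ᵐ ω ∂ℙ, L ω (F ω) =ᵐ[m] fun x => Real.exp ρ * F (θ ω) x) := by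
  set ψ : Ω → X → ℝ := fun ω x => g ω x / h ω x
  have hPF ω : IsPerronFrobenius m (T ω) (L ω) := hL ω
  have hqmp ω : Measure.QuasiMeasurePreserving (T ω) m m := (hPF ω).quasiMeasurePreserving (hT ω)
  have hhpos ω : ∀ᵐ x ∂m, 0 < h ω x ∧ h ω x ≤ H :=
    (hhbd ω).mono fun _ hx => ⟨hδ.trans_le hx.1, hx.2⟩
  have hψ ω : ∀ᵐ x ∂m, |ψ ω x| ≤ G / δ := by
    filter_upwards [hhbd ω, hgbd ω] with x hh hg
    rw [abs_div, abs_of_pos (hδ.trans_le hh.1)]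
    exact div_le_div₀ ((abs_nonneg _).trans hg) hg hδ hh.1
  have hψn := ae_forall_mapIter (θ := θ) hqmp hψ
  have hFS ω : F ω = fun x => discountedSum ρ θ T ψ ω x * h ω x :=
    funext fun x => (hF ω x).trans tsum_mul_right
  refine ⟨fun ω => tsum_eLpNorm_discountedTerm_mul_lt_top hqmp hρ hψ
    ((hhpos ω).mono fun _ hx => (abs_of_pos hx.1).trans_le hx.2) ω, ?_⟩
  filter_upwards [hpres, hgzero] with ω hpω hgω
  have hS := measurable_discountedSum (ρ := ρ) (θ := θ) hqmp fun ω => (hgmeas ω).div (hhmeas ω)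
  rw [hFS ω, hFS (θ ω)]
  exact (hPF ω).ae_eq_const_mul_of_eq_div_add_comp (hT ω) (hLint ω) (hhmeas ω) (hhmeas (θ ω))
    (hhpos ω) ((hhpos (θ ω)).mono fun _ hx => ⟨hx.1.le, hx.2⟩) hpω
    (.of_bound (hgmeas ω).aestronglyMeasurable G (hgbd ω)) hgω
    (hS ω).aestronglyMeasurable (hS (θ ω)).aestronglyMeasurable
    ((hψn ω).mono fun _ hx => abs_discountedSum_le hρ hx)
    ((hψn (θ ω)).mono fun _ hx => abs_discountedSum_le hρ hx)
    ((hψn ω).mono fun _ hx => discountedSum_eq_add hρ hx)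

/-- Suppose `h : Ω → L^∞` is a preserved positive random density with
`δ ≤ h_ω ≤ H` m-a.e. (`0 < δ ≤ H < ∞`) and `g : Ω → L^∞` satisfies `‖g_ω‖_∞ ≤ G` and
`𝓛_ω g_ω = 0` a.e.  Let `ρ < 0`.  Then the series
`f_ω = Σ_{n≥0} e^{ρn} ((g_{θⁿω}/h_{θⁿω}) ∘ T_ω^{(n)}) · h_ω` converges absolutely in
`L^∞(X,m)`, and `𝓛_ω f_ω = e^ρ f_{θω}` for a.e. `ω`. -/
theorem series_eigenfunction_construction
    {Ω X : Type*} [MeasurableSpace Ω] [MeasurableSpace X]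
    (ℙ : Measure Ω) [IsProbabilityMeasure ℙ]
    (m : Measure X) [IsFiniteMeasure m]
    (θ : Ω → Ω) (hθ : MeasurePreserving θ ℙ ℙ) (hθinv : Function.Bijective θ)
    (T : Ω → X → X) (hT : ∀ ω, Measurable (T ω))
    (L : Ω → (X → ℝ) → X → ℝ)
    (hLint : ∀ ω (g : X → ℝ), Integrable g m → Integrable (L ω g) m)
    (hL : ∀ ω (g : X → ℝ), Integrable g m → ∀ B : Set X, MeasurableSet B →
      ∫ x in B, L ω g x ∂m = ∫ x in T ω ⁻¹' B, g x ∂m)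
    (h g : Ω → X → ℝ)
    (hhmeas : ∀ ω, Measurable (h ω)) (hgmeas : ∀ ω, Measurable (g ω))
    (δ H G : ℝ) (hδ : 0 < δ) (hδH : δ ≤ H)
    (hhbd : ∀ ω, ∀ᵐ x ∂m, δ ≤ h ω x ∧ h ω x ≤ H)
    (hpres : ∀ᵐ ω ∂ℙ, L ω (h ω) =ᵐ[m] h (θ ω))
    (hgbd : ∀ ω, ∀ᵐ x ∂m, |g ω x| ≤ G)
    (hgzero : ∀ᵐ ω ∂ℙ, L ω (g ω) =ᵐ[m] fun _ => (0 : ℝ))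
    (ρ : ℝ) (hρ : ρ < 0)
    (F : Ω → X → ℝ)
    (hF : ∀ ω x, F ω x = ∑' n : ℕ,
      Real.exp (ρ * n) *
        (g (θ^[n] ω) (mapIter θ T n ω x) / h (θ^[n] ω) (mapIter θ T n ω x)) * h ω x) :
    (∀ ω, (∑' n : ℕ, eLpNorm
        (fun x => Real.exp (ρ * n) *
          (g (θ^[n] ω) (mapIter θ T n ω x) / h (θ^[n] ω) (mapIter θ T n ω x)) * h ω x)
        ⊤ m) < ⊤) ∧
    (∀ᵐ ω ∂ℙ, L ω (F ω) =ᵐ[m] fun x => Real.exp ρ * F (θ ω) x) :=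
  series_eigenfunction_construction_general ℙ m θ T hT L hLint hL h g hhmeas hgmeas δ H G hδ hhbd
    hpres hgbd hgzero ρ hρ F hF
end

section
/- Fix ω ∈ Ω and λ₁ ∈ ℝ, and assume: (a) there exists a nonzero v₁ ∈ ℝ^k such that lim_{n→∞}(1/n) log ‖v₁ A^{(n)}(ω)‖₁ exists and equals λ₁; and (b) for every w ∈ ℝ^k, limsup_{n→∞}(1/n) log ‖w A^{(n)}(ω)‖₁ ≤ λ₁. Then for every v ∈ ℝ^k with all coordinates strictly positive, the limit lim_{n→∞}(1/n) log ‖v A^{(n)}(ω)‖₁ exists and equals λ₁. -/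
/-!
`A^{(n)}(ω)` has nonnegative entries, so if `c |v₁| ≤ v` coordinatewise then
`c ‖v₁ A^{(n)}(ω)‖₁ ≤ ‖v A^{(n)}(ω)‖₁`, and the growth rate of `v` is at least that of `v₁`,
namely `λ₁`; with (b) this gives the limit. This fails only if `v₁ A^{(n₀)}(ω) = 0` for some `n₀`.
Then `v₁ A^{(n)}(ω) = 0` for all `n ≥ n₀`, so, as `log 0 = 0`, (a) forces `λ₁ = 0`; but
`A^{(n)}(ω)` has natural-number entries, so `‖v A^{(n)}(ω)‖₁` is either `0` or at least `minᵢ vᵢ`,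
and the growth rate of `v` is at least `0`. The bound `‖w A^{(n)}(ω)‖₁ ≤ kⁿ ‖w‖₁` keeps the
rates bounded above, which the passage from `limsup` to a limit needs.
-/

open MeasureTheory Filter Topology

/-- The matrix cocycle: `matIter θ A n ω = A(ω)A(θω)⋯A(θ^{n-1}ω)` (with `matIter θ A 0 ω = 1`). -/
noncomputable def matIter {Ω : Type*} {k : ℕ} (θ : Ω → Ω)
    (A : Ω → Matrix (Fin k) (Fin k) ℝ) : ℕ → Ω → Matrix (Fin k) (Fin k) ℝ
  | 0, _ => 1
  | n + 1, ω => A ω * matIter θ A n (θ ω)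

/-- The ℓ¹ norm of a row vector: `‖v‖₁ = Σᵢ |vᵢ|`. -/
noncomputable def l1norm {k : ℕ} (v : Fin k → ℝ) : ℝ := ∑ i, |v i|

open Matrix

lemma Filter.Tendsto.of_eventually_ge_of_limsup_le {α : Type*} {l : Filter α} [l.NeBot]
    {f g : α → ℝ} {L : ℝ} (hg : Tendsto g l (𝓝 L)) (hgf : g ≤ᶠ[l] f)
    (hf : IsBoundedUnder (· ≤ ·) l f) (hlim : limsup f l ≤ L) : Tendsto f l (𝓝 L) := by
  have hliminf : L ≤ liminf f l :=
    hg.liminf_eq ▸ liminf_le_liminf hgf hg.isBoundedUnder_ge hf.isCoboundedUnder_ge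
  exact tendsto_of_le_liminf_of_limsup_le hliminf hlim hf (hg.isBoundedUnder_ge.mono_ge hgf)

section l1norm

variable {m n : ℕ}

lemma l1norm_nonneg (v : Fin n → ℝ) : 0 ≤ l1norm v :=
  Finset.sum_nonneg fun _ _ => abs_nonneg _

lemma abs_le_l1norm (v : Fin n → ℝ) (i : Fin n) : |v i| ≤ l1norm v :=
  Finset.single_le_sum (f := fun i => |v i|) (fun _ _ => abs_nonneg _) (Finset.mem_univ i)

lemma l1norm_pos {v : Fin n → ℝ} (hv : v ≠ 0) : 0 < l1norm v := by
  obtain ⟨i, hi⟩ := Function.ne_iff.1 hv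
  exact (abs_pos.2 hi).trans_le (abs_le_l1norm v i)

lemma l1norm_smul (c : ℝ) (v : Fin n → ℝ) : l1norm (c • v) = |c| * l1norm v := by
  simp only [l1norm, Pi.smul_apply, smul_eq_mul, abs_mul, Finset.mul_sum]

lemma l1norm_vecMul_le_of_abs_le {u v : Fin m → ℝ} {N : Matrix (Fin m) (Fin n) ℝ}
    (hN : ∀ i j, 0 ≤ N i j) (huv : ∀ i, |u i| ≤ v i) :
    l1norm (u ᵥ* N) ≤ l1norm (v ᵥ* N) := by
  unfold l1norm
  refine Finset.sum_le_sum fun j _ => ?_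
  calc |(u ᵥ* N) j| ≤ ∑ i, |u i| * N i j := by
        refine (Finset.abs_sum_le_sum_abs (fun i => u i * N i j) Finset.univ).trans_eq ?_
        simp only [abs_mul, abs_of_nonneg (hN _ j)]
    _ ≤ ∑ i, v i * N i j :=
        Finset.sum_le_sum fun i _ => mul_le_mul_of_nonneg_right (huv i) (hN i j)
    _ ≤ |(v ᵥ* N) j| := le_abs_self _

lemma l1norm_vecMul_le (w : Fin m → ℝ) {N : Matrix (Fin m) (Fin n) ℝ}
    (hN : ∀ i j, |N i j| ≤ 1) : l1norm (w ᵥ* N) ≤ n * l1norm w := by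
  calc l1norm (w ᵥ* N) = ∑ j, |(w ᵥ* N) j| := rfl
    _ ≤ ∑ _j : Fin n, l1norm w := Finset.sum_le_sum fun j _ => by
        refine (Finset.abs_sum_le_sum_abs (fun i => w i * N i j) Finset.univ).trans (Finset.sum_le_sum fun i _ => ?_)
        rw [abs_mul]
        exact mul_le_of_le_one_right (abs_nonneg _) (hN i j)
    _ = n * l1norm w := by simp

lemma le_l1norm_vecMul_of_mem_rangeS {v : Fin m → ℝ} {N : Matrix (Fin m) (Fin n) ℝ} {a : ℝ}
    (ha : 0 ≤ a) (hv : ∀ i, a ≤ v i) (hN : ∀ i j, N i j ∈ (Nat.castRingHom ℝ).rangeS)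
    (hvN : v ᵥ* N ≠ 0) : a ≤ l1norm (v ᵥ* N) := by
  choose c hc using fun i j => RingHom.mem_rangeS.1 (hN i j)
  simp only [Nat.coe_castRingHom] at hc
  obtain ⟨i, j, hij⟩ : ∃ i j, N i j ≠ 0 := by
    by_contra! h
    exact hvN (by rw [show N = 0 from Matrix.ext h, vecMul_zero])
  have hone : 1 ≤ N i j := by
    rw [← hc] at hij ⊢
    exact_mod_cast Nat.one_le_iff_ne_zero.2 (by exact_mod_cast hij)
  have hterm : ∀ i', 0 ≤ v i' * N i' j := fun i' =>
    mul_nonneg (ha.trans (hv i')) (hc i' j ▸ Nat.cast_nonneg _)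
  calc a ≤ v i * N i j := (hv i).trans (le_mul_of_one_le_right (ha.trans (hv i)) hone)
    _ ≤ (v ᵥ* N) j := Finset.single_le_sum (fun i' _ => hterm i') (Finset.mem_univ i)
    _ ≤ |(v ᵥ* N) j| := le_abs_self _
    _ ≤ l1norm (v ᵥ* N) := abs_le_l1norm _ j

end l1norm

section matIter

variable {Ω : Type*} {k : ℕ} (θ : Ω → Ω) (A : Ω → Matrix (Fin k) (Fin k) ℝ)

lemma matIter_add (n m : ℕ) (ω : Ω) :
    matIter θ A (n + m) ω = matIter θ A n ω * matIter θ A m (θ^[n] ω) := by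
  induction n generalizing ω with
  | zero => simp [matIter]
  | succ n ih =>
    rw [Nat.succ_add, matIter, matIter, ih, Matrix.mul_assoc, Function.iterate_succ_apply]

lemma matIter_mem {S : Subsemiring ℝ} (hA : ∀ ω i j, A ω i j ∈ S) (n : ℕ) (ω : Ω) (i j : Fin k) :
    matIter θ A n ω i j ∈ S := by
  induction n generalizing ω i j with
  | zero =>
    rw [matIter, Matrix.one_apply]
    split_ifs
    exacts [S.one_mem, S.zero_mem]
  | succ n ih =>
    rw [matIter, Matrix.mul_apply]
    exact S.sum_mem fun l _ => S.mul_mem (hA ω i l) (ih (θ ω) l j)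

lemma matIter_nonneg_of_mem_rangeS (hA : ∀ ω i j, A ω i j ∈ (Nat.castRingHom ℝ).rangeS)
    (n : ℕ) (ω : Ω) (i j : Fin k) : 0 ≤ matIter θ A n ω i j := by
  obtain ⟨c, hc⟩ := matIter_mem θ A hA n ω i j
  exact hc ▸ Nat.cast_nonneg c

lemma l1norm_vecMul_matIter_le (hA : ∀ ω i j, |A ω i j| ≤ 1) (n : ℕ) (ω : Ω)
    (w : Fin k → ℝ) : l1norm (w ᵥ* matIter θ A n ω) ≤ (k : ℝ) ^ n * l1norm w := by
  induction n generalizing ω w with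
  | zero => simp [matIter]
  | succ n ih =>
    rw [matIter, ← vecMul_vecMul]
    calc l1norm (w ᵥ* A ω ᵥ* matIter θ A n (θ ω)) ≤ (k : ℝ) ^ n * l1norm (w ᵥ* A ω) :=
          ih (θ ω) _
      _ ≤ (k : ℝ) ^ n * (k * l1norm w) := by gcongr; exact l1norm_vecMul_le w (hA ω)
      _ = (k : ℝ) ^ (n + 1) * l1norm w := by ring

lemma vecMul_matIter_eq_zero_of_le {ω : Ω} {u : Fin k → ℝ} {n₀ n : ℕ}
    (h₀ : u ᵥ* matIter θ A n₀ ω = 0) (hn : n₀ ≤ n) : u ᵥ* matIter θ A n ω = 0 := by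
  obtain ⟨m, rfl⟩ := Nat.exists_eq_add_of_le hn
  rw [matIter_add, ← vecMul_vecMul, h₀, zero_vecMul]

end matIter

section logGrowth

variable {Ω : Type*} {k : ℕ} (θ : Ω → Ω) (A : Ω → Matrix (Fin k) (Fin k) ℝ) (ω : Ω)

noncomputable def logGrowth (v : Fin k → ℝ) (n : ℕ) : ℝ :=
  (n : ℝ)⁻¹ * Real.log (l1norm (v ᵥ* matIter θ A n ω))

lemma logGrowth_le (hA : ∀ ω i j, |A ω i j| ≤ 1) (v : Fin k → ℝ) (n : ℕ) :
    logGrowth θ A ω v n ≤ |Real.log k| + |Real.log (l1norm v)| := by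
  have hB : 0 ≤ |Real.log k| + |Real.log (l1norm v)| := by positivity
  rcases Nat.eq_zero_or_pos n with rfl | hn
  · simpa [logGrowth] using hB
  rcases (l1norm_nonneg (v ᵥ* matIter θ A n ω)).eq_or_lt with h0 | hpos
  · simpa [logGrowth, ← h0] using hB
  have hle := l1norm_vecMul_matIter_le θ A hA n ω v
  have hprod := hpos.trans_le hle
  have hn' : (1 : ℝ) ≤ n := by exact_mod_cast hn
  calc logGrowth θ A ω v n
      ≤ (n : ℝ)⁻¹ * (n * (|Real.log k| + |Real.log (l1norm v)|)) := by
        refine mul_le_mul_of_nonneg_left ?_ (by positivity)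
        calc Real.log (l1norm (v ᵥ* matIter θ A n ω))
            ≤ Real.log ((k : ℝ) ^ n * l1norm v) := Real.log_le_log hpos hle
          _ = n * Real.log k + Real.log (l1norm v) := by
            rw [Real.log_mul (left_ne_zero_of_mul hprod.ne') (right_ne_zero_of_mul hprod.ne'),
              Real.log_pow]
          _ ≤ n * (|Real.log k| + |Real.log (l1norm v)|) := by
            nlinarith [le_abs_self (Real.log k), le_abs_self (Real.log (l1norm v)),
              abs_nonneg (Real.log k), abs_nonneg (Real.log (l1norm v))]
    _ = |Real.log k| + |Real.log (l1norm v)| := by field_simp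

lemma inv_mul_min_log_le_logGrowth (hA : ∀ ω i j, A ω i j ∈ (Nat.castRingHom ℝ).rangeS)
    {v : Fin k → ℝ} {a : ℝ} (ha : 0 < a) (hv : ∀ i, a ≤ v i) (n : ℕ) :
    (n : ℝ)⁻¹ * min (Real.log a) 0 ≤ logGrowth θ A ω v n := by
  by_cases h : v ᵥ* matIter θ A n ω = 0
  · simpa [logGrowth, h, l1norm] using
      mul_nonpos_of_nonneg_of_nonpos (by positivity : (0 : ℝ) ≤ (n : ℝ)⁻¹) (min_le_right _ _)
  · refine mul_le_mul_of_nonneg_left ((min_le_left _ _).trans (Real.log_le_log ha ?_))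
      (by positivity)
    exact le_l1norm_vecMul_of_mem_rangeS ha.le hv (matIter_mem θ A hA n ω) h

lemma inv_mul_log_add_logGrowth_le (hA : ∀ n ω i j, 0 ≤ matIter θ A n ω i j)
    {u v : Fin k → ℝ} {c : ℝ} (hc : 0 < c) (hcuv : ∀ i, c * |u i| ≤ v i) {n : ℕ}
    (hu : u ᵥ* matIter θ A n ω ≠ 0) :
    (n : ℝ)⁻¹ * Real.log c + logGrowth θ A ω u n ≤ logGrowth θ A ω v n := by
  have hcomp : c * l1norm (u ᵥ* matIter θ A n ω) ≤ l1norm (v ᵥ* matIter θ A n ω) := by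
    have := l1norm_vecMul_le_of_abs_le (u := c • u) (hA n ω)
      (by simpa only [Pi.smul_apply, smul_eq_mul, abs_mul, abs_of_pos hc] using hcuv)
    rwa [smul_vecMul, l1norm_smul, abs_of_pos hc] at this
  rw [logGrowth, logGrowth, ← mul_add, ← Real.log_mul hc.ne' (l1norm_pos hu).ne']
  exact mul_le_mul_of_nonneg_left (Real.log_le_log (mul_pos hc (l1norm_pos hu)) hcomp)
    (by positivity)

lemma logGrowth_eventuallyEq_zero {u : Fin k → ℝ} {n₀ : ℕ} (h₀ : u ᵥ* matIter θ A n₀ ω = 0) :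
    logGrowth θ A ω u =ᶠ[atTop] 0 := by
  filter_upwards [eventually_ge_atTop n₀] with n hn
  simp [logGrowth, vecMul_matIter_eq_zero_of_le θ A h₀ hn, l1norm]

lemma exists_tendsto_le_logGrowth (hA : ∀ ω i j, A ω i j ∈ (Nat.castRingHom ℝ).rangeS)
    {u v : Fin k → ℝ} {L : ℝ} (hu : Tendsto (logGrowth θ A ω u) atTop (𝓝 L))
    (hv : ∀ i, 0 < v i) :
    ∃ g : ℕ → ℝ, Tendsto g atTop (𝓝 L) ∧ g ≤ᶠ[atTop] logGrowth θ A ω v := by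
  obtain ⟨a, ha, hav⟩ : ∃ a, 0 < a ∧ ∀ i, a ≤ v i := by
    rcases isEmpty_or_nonempty (Fin k) with _ | _
    · exact ⟨1, one_pos, isEmptyElim⟩
    · obtain ⟨i₀, hi₀⟩ := Finite.exists_min v
      exact ⟨v i₀, hv i₀, hi₀⟩
  by_cases hvanish : ∃ n₀, u ᵥ* matIter θ A n₀ ω = 0
  · obtain ⟨n₀, h₀⟩ := hvanish
    obtain rfl : L = 0 := tendsto_nhds_unique hu
      (tendsto_const_nhds.congr' (logGrowth_eventuallyEq_zero θ A ω h₀).symm)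
    exact ⟨_, by simpa using tendsto_inv_atTop_nhds_zero_nat.mul_const (min (Real.log a) 0),
      Eventually.of_forall (inv_mul_min_log_le_logGrowth θ A ω hA ha hav)⟩
  push Not at hvanish
  have hu₀ : u ≠ 0 := by simpa [matIter] using hvanish 0
  set c := a / l1norm u
  have hc : 0 < c := div_pos ha (l1norm_pos hu₀)
  have hcuv : ∀ i, c * |u i| ≤ v i := fun i =>
    calc c * |u i| ≤ c * l1norm u := mul_le_mul_of_nonneg_left (abs_le_l1norm u i) hc.le
      _ = a := div_mul_cancel₀ _ (l1norm_pos hu₀).ne'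
      _ ≤ v i := hav i
  exact ⟨_, by simpa using (tendsto_inv_atTop_nhds_zero_nat.mul_const (Real.log c)).add hu,
    Eventually.of_forall fun n => inv_mul_log_add_logGrowth_le θ A ω
      (matIter_nonneg_of_mem_rangeS θ A hA) hc hcuv (hvanish n)⟩

end logGrowth

theorem positive_vector_attains_top_exponent_general
    {Ω : Type*}
    (θ : Ω → Ω)
    (k : ℕ)
    (A : Ω → Matrix (Fin k) (Fin k) ℝ)
    (h01 : ∀ ω i j, A ω i j = 0 ∨ A ω i j = 1)
    (ω : Ω) (lam1 : ℝ)
    (ha : ∃ v₁ : Fin k → ℝ, v₁ ≠ 0 ∧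
      Filter.Tendsto
        (fun n : ℕ => (n : ℝ)⁻¹ * Real.log (l1norm (Matrix.vecMul v₁ (matIter θ A n ω))))
        Filter.atTop (𝓝 lam1))
    (hb : ∀ w : Fin k → ℝ,
      Filter.limsup
        (fun n : ℕ => (n : ℝ)⁻¹ * Real.log (l1norm (Matrix.vecMul w (matIter θ A n ω))))
        Filter.atTop ≤ lam1) :
    ∀ v : Fin k → ℝ, (∀ i, 0 < v i) →
      Filter.Tendsto
        (fun n : ℕ => (n : ℝ)⁻¹ * Real.log (l1norm (Matrix.vecMul v (matIter θ A n ω))))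
        Filter.atTop (𝓝 lam1) := by
  intro v hv
  obtain ⟨v₁, -, hv₁⟩ := ha
  have hAnat : ∀ ω i j, A ω i j ∈ (Nat.castRingHom ℝ).rangeS := fun ω i j => by
    rcases h01 ω i j with h | h
    exacts [⟨0, by simp [h]⟩, ⟨1, by simp [h]⟩]
  have hAle : ∀ ω i j, |A ω i j| ≤ 1 := fun ω i j => by
    rcases h01 ω i j with h | h <;> simp [h]
  obtain ⟨g, hg, hgv⟩ := exists_tendsto_le_logGrowth θ A ω hAnat hv₁ hv
  exact hg.of_eventually_ge_of_limsup_le hgv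
    (isBoundedUnder_of_eventually_le (Eventually.of_forall (logGrowth_le θ A ω hAle v))) (hb v)

/-- Fix `ω` and `λ₁ ∈ ℝ` and assume: (a) there is a nonzero `v₁` with
`lim (1/n) log ‖v₁ A^{(n)}(ω)‖₁ = λ₁`, and (b) for every `w`,
`limsup (1/n) log ‖w A^{(n)}(ω)‖₁ ≤ λ₁`.  Then for every strictly positive `v` the limit
`lim (1/n) log ‖v A^{(n)}(ω)‖₁` exists and equals `λ₁`. -/
theorem positive_vector_attains_top_exponent
    {Ω : Type*} [MeasurableSpace Ω]
    (ℙ : Measure Ω) [IsProbabilityMeasure ℙ]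
    (θ : Ω → Ω) (hθ : MeasurePreserving θ ℙ ℙ) (hθinv : Function.Bijective θ)
    (k : ℕ) (hk : 2 ≤ k)
    (A : Ω → Matrix (Fin k) (Fin k) ℝ)
    (hAmeas : ∀ i j, Measurable fun ω => A ω i j)
    (h01 : ∀ ω i j, A ω i j = 0 ∨ A ω i j = 1)
    (ω : Ω) (lam1 : ℝ)
    (ha : ∃ v₁ : Fin k → ℝ, v₁ ≠ 0 ∧
      Filter.Tendsto
        (fun n : ℕ => (n : ℝ)⁻¹ * Real.log (l1norm (Matrix.vecMul v₁ (matIter θ A n ω))))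
        Filter.atTop (𝓝 lam1))
    (hb : ∀ w : Fin k → ℝ,
      Filter.limsup
        (fun n : ℕ => (n : ℝ)⁻¹ * Real.log (l1norm (Matrix.vecMul w (matIter θ A n ω))))
        Filter.atTop ≤ lam1) :
    ∀ v : Fin k → ℝ, (∀ i, 0 < v i) →
      Filter.Tendsto
        (fun n : ℕ => (n : ℝ)⁻¹ * Real.log (l1norm (Matrix.vecMul v (matIter θ A n ω))))
        Filter.atTop (𝓝 lam1) :=
  positive_vector_attains_top_exponent_general θ k A h01 ω lam1 ha hb
end

section
/- Fix ω ∈ Ω and v ∈ ℝ^k. Then for every n ≥ 1 and every index i ∈ {1,…,k}, one has (v·A^{(n)}(ω))_i ≤ (v·B^{(n)}(ω))_i; consequently ‖(v·A^{(n)}(ω))⁺‖₁ ≤ ‖v·B^{(n)}(ω)‖₁, where u⁺ denotes the coordinatewise positive part of a vector u. -/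
/-!
Write `x_n = v·A^{(n)}(ω)` and `y_n = v·B^{(n)}(ω)`. By induction, `x_n i ≤ y_n i` whenever
`x_n i > 0`. For the step, `x_{n+1} j = ∑ᵢ x_n i A_ij`: dropping the terms with `x_n i ≤ 0` only
increases the sum, since `A ≥ 0`, and on the remaining terms `x_n i ≤ y_n i`. The result is exactly
`(y_n B(θⁿω)) j = y_{n+1} j` when `x_{n+1} j > 0`, while `y_{n+1} j = 0` otherwise, because `B`
kills the column `j`. Hence `max (x_{n+1} j) 0 ≤ y_{n+1} j` for every `j`, which gives both claims.
-/

open MeasureTheory Filter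

/-- The matrix `B(θⁿω)`: `B_{ij}(θⁿω) = A_{ij}(θⁿω)` if `(v·A^{(n)}(ω))_i > 0` and
`(v·A^{(n+1)}(ω))_j > 0`, and `0` otherwise. -/
noncomputable def Bmat {Ω : Type*} {k : ℕ} (θ : Ω → Ω)
    (A : Ω → Matrix (Fin k) (Fin k) ℝ) (v : Fin k → ℝ) (ω : Ω) (n : ℕ) :
    Matrix (Fin k) (Fin k) ℝ :=
  fun i j =>
    if 0 < Matrix.vecMul v (matIter θ A n ω) i ∧
        0 < Matrix.vecMul v (matIter θ A (n + 1) ω) j then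
      A (θ^[n] ω) i j
    else 0

/-- `BIter θ A v ω s n = B(θˢω)B(θ^{s+1}ω)⋯B(θ^{s+n-1}ω)`; in particular
`BIter θ A v ω 0 n = B^{(n)}(ω)`. -/
noncomputable def BIter {Ω : Type*} {k : ℕ} (θ : Ω → Ω)
    (A : Ω → Matrix (Fin k) (Fin k) ℝ) (v : Fin k → ℝ) (ω : Ω) :
    ℕ → ℕ → Matrix (Fin k) (Fin k) ℝ
  | _, 0 => 1
  | s, n + 1 => Bmat θ A v ω s * BIter θ A v ω (s + 1) n

open Matrix

section PosRestrict

variable {R m n : Type*} [CommRing R] [LinearOrder R] [IsStrictOrderedRing R] [Fintype m]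

def posRestrict (x : m → R) (y : n → R) (M : Matrix m n R) : Matrix m n R :=
  of fun i j => if 0 < x i ∧ 0 < y j then M i j else 0

theorem max_vecMul_le_vecMul_posRestrict {M : Matrix m n R} (hM : ∀ i j, 0 ≤ M i j)
    {x u : m → R} (hxu : ∀ i, 0 < x i → x i ≤ u i) (j : n) :
    max ((x ᵥ* M) j) 0 ≤ (u ᵥ* posRestrict x (x ᵥ* M) M) j := by
  simp only [vecMul, dotProduct, posRestrict, of_apply, mul_ite, mul_zero]
  by_cases hj : 0 < ∑ i, x i * M i j
  · rw [max_eq_left hj.le]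
    refine Finset.sum_le_sum fun i _ => ?_
    by_cases hi : 0 < x i
    · rw [if_pos ⟨hi, hj⟩]
      exact mul_le_mul_of_nonneg_right (hxu i hi) (hM i j)
    · rw [if_neg fun h => hi h.1]
      exact mul_nonpos_of_nonpos_of_nonneg (not_lt.mp hi) (hM i j)
  · simp [hj, le_of_not_gt hj]

end PosRestrict

section Cocycle

variable {Ω : Type*} {k : ℕ} (θ : Ω → Ω) (A : Ω → Matrix (Fin k) (Fin k) ℝ)
  (v : Fin k → ℝ) (ω : Ω)

theorem matIter_succ_right (n : ℕ) (ω : Ω) :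
    matIter θ A (n + 1) ω = matIter θ A n ω * A (θ^[n] ω) := by
  induction n generalizing ω with
  | zero => simp [matIter]
  | succ n ih =>
    rw [matIter, ih (θ ω), matIter, Matrix.mul_assoc, Function.iterate_succ_apply]

theorem BIter_succ_right (s n : ℕ) :
    BIter θ A v ω s (n + 1) = BIter θ A v ω s n * Bmat θ A v ω (s + n) := by
  induction n generalizing s with
  | zero => simp [BIter]
  | succ n ih =>
    rw [BIter, ih (s + 1), BIter, Matrix.mul_assoc, add_right_comm, add_assoc]

theorem Bmat_eq_posRestrict (n : ℕ) :
    Bmat θ A v ω n = posRestrict (v ᵥ* matIter θ A n ω)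
      (v ᵥ* matIter θ A n ω ᵥ* A (θ^[n] ω)) (A (θ^[n] ω)) := by
  rw [vecMul_vecMul, ← matIter_succ_right]
  rfl

variable {θ A v ω}

theorem max_vecMul_matIter_succ_le (hA : ∀ ω i j, 0 ≤ A ω i j) {n : ℕ}
    (hn : ∀ i, 0 < (v ᵥ* matIter θ A n ω) i →
      (v ᵥ* matIter θ A n ω) i ≤ (v ᵥ* BIter θ A v ω 0 n) i) (j : Fin k) :
    max ((v ᵥ* matIter θ A (n + 1) ω) j) 0 ≤ (v ᵥ* BIter θ A v ω 0 (n + 1)) j := by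
  rw [matIter_succ_right, ← vecMul_vecMul, BIter_succ_right, ← vecMul_vecMul, zero_add,
    Bmat_eq_posRestrict]
  exact max_vecMul_le_vecMul_posRestrict (hA _) hn j

theorem vecMul_matIter_le_vecMul_BIter_of_pos (hA : ∀ ω i j, 0 ≤ A ω i j) (n : ℕ) (i : Fin k)
    (hi : 0 < (v ᵥ* matIter θ A n ω) i) :
    (v ᵥ* matIter θ A n ω) i ≤ (v ᵥ* BIter θ A v ω 0 n) i := by
  induction n generalizing i with
  | zero => simp [matIter, BIter]
  | succ n ih => exact (le_max_left _ _).trans (max_vecMul_matIter_succ_le hA ih i)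

end Cocycle

theorem vecMul_A_le_vecMul_B_general
    {Ω : Type*}
    (θ : Ω → Ω)
    (k : ℕ)
    (A : Ω → Matrix (Fin k) (Fin k) ℝ)
    (h01 : ∀ ω i j, A ω i j = 0 ∨ A ω i j = 1)
    (ω : Ω) (v : Fin k → ℝ) :
    ∀ n : ℕ, 1 ≤ n →
      (∀ i, Matrix.vecMul v (matIter θ A n ω) i
          ≤ Matrix.vecMul v (BIter θ A v ω 0 n) i) ∧
      (∑ i, max (Matrix.vecMul v (matIter θ A n ω) i) 0
          ≤ ∑ i, |Matrix.vecMul v (BIter θ A v ω 0 n) i|) := by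
  have hA : ∀ ω i j, 0 ≤ A ω i j := fun ω i j => by rcases h01 ω i j with h | h <;> simp [h]
  intro _ hn
  obtain ⟨n, rfl⟩ := Nat.exists_eq_add_of_le' hn
  have key := max_vecMul_matIter_succ_le hA
    (vecMul_matIter_le_vecMul_BIter_of_pos (θ := θ) (v := v) (ω := ω) hA n)
  exact ⟨fun i => (le_max_left _ _).trans (key i),
    Finset.sum_le_sum fun i _ => (key i).trans (le_abs_self _)⟩

/-- Fix `ω` and `v ∈ ℝ^k`.  Then for every `n ≥ 1` and every `i`,
`(v·A^{(n)}(ω))_i ≤ (v·B^{(n)}(ω))_i`; consequently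
`‖(v·A^{(n)}(ω))⁺‖₁ ≤ ‖v·B^{(n)}(ω)‖₁`. -/
theorem vecMul_A_le_vecMul_B
    {Ω : Type*} [MeasurableSpace Ω]
    (ℙ : Measure Ω) [IsProbabilityMeasure ℙ]
    (θ : Ω → Ω) (hθ : MeasurePreserving θ ℙ ℙ) (hθinv : Function.Bijective θ)
    (k : ℕ) (hk : 2 ≤ k)
    (A : Ω → Matrix (Fin k) (Fin k) ℝ)
    (hAmeas : ∀ i j, Measurable fun ω => A ω i j)
    (h01 : ∀ ω i j, A ω i j = 0 ∨ A ω i j = 1)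
    (ω : Ω) (v : Fin k → ℝ) :
    ∀ n : ℕ, 1 ≤ n →
      (∀ i, Matrix.vecMul v (matIter θ A n ω) i
          ≤ Matrix.vecMul v (BIter θ A v ω 0 n) i) ∧
      (∑ i, max (Matrix.vecMul v (matIter θ A n ω) i) 0
          ≤ ∑ i, |Matrix.vecMul v (BIter θ A v ω 0 n) i|) :=
  vecMul_A_le_vecMul_B_general θ k A h01 ω v
end

section
/- Fix ω ∈ Ω, N ∈ ℕ such that every entry of A^{(N)}(ω) is at least 1, and v ∈ ℝ^k. Suppose the vector v·A^{(N)}(ω) has at least one coordinate ≤ 0 and at least one coordinate ≥ 0. Then ‖v⁺‖₁ ≤ k^N ‖v⁻‖₁ and ‖v⁻‖₁ ≤ k^N ‖v⁺‖₁, where v⁺ and v⁻ denote the coordinatewise positive and negative parts of v (so v = v⁺ − v⁻ with v⁺, v⁻ ≥ 0). -/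
open MeasureTheory Filter

/-! If the column `m` of `A^{(N)}(ω)` has entries in `[1, k^N]`, then `v ⬝ᵥ m ≤ 0` gives
`‖v⁺‖₁ ≤ ∑ v⁺ᵢ mᵢ ≤ ∑ v⁻ᵢ mᵢ ≤ k^N ‖v⁻‖₁`; the other inequality is the same argument for `-v`
and a column with `v ⬝ᵥ m ≥ 0`. -/

theorem matIter_apply_mem_Icc {Ω : Type*} {k : ℕ} (θ : Ω → Ω)
    (A : Ω → Matrix (Fin k) (Fin k) ℝ) (hA : ∀ ω i j, A ω i j ∈ Set.Icc 0 1) :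
    ∀ n ω i j, matIter θ A n ω i j ∈ Set.Icc 0 ((k : ℝ) ^ n) := by
  intro n
  induction n with
  | zero =>
    intro ω i j
    rw [matIter, Matrix.one_apply]
    split_ifs <;> simp
  | succ n ih =>
    intro ω i j
    rw [matIter, Matrix.mul_apply]
    constructor
    · exact Finset.sum_nonneg fun l _ => mul_nonneg (hA ω i l).1 (ih (θ ω) l j).1
    · calc ∑ l, A ω i l * matIter θ A n (θ ω) l j
          ≤ ∑ _l : Fin k, (k : ℝ) ^ n := Finset.sum_le_sum fun l _ =>
            (mul_le_of_le_one_left (ih (θ ω) l j).1 (hA ω i l).2).trans (ih (θ ω) l j).2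
        _ = (k : ℝ) ^ (n + 1) := by simp [pow_succ, mul_comm]

theorem sum_max_le_mul_sum_max_neg_of_dotProduct_nonpos {ι : Type*} [Fintype ι]
    {m : ι → ℝ} {K : ℝ} (hm : ∀ i, m i ∈ Set.Icc 1 K) {v : ι → ℝ} (hvm : v ⬝ᵥ m ≤ 0) :
    ∑ i, max (v i) 0 ≤ K * ∑ i, max (-v i) 0 := by
  have hparts : ∑ i, max (v i) 0 * m i ≤ ∑ i, max (-v i) 0 * m i := by
    have hsplit : v ⬝ᵥ m = ∑ i, max (v i) 0 * m i - ∑ i, max (-v i) 0 * m i := by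
      simp only [dotProduct, ← Finset.sum_sub_distrib, ← sub_mul,
        max_zero_sub_max_neg_zero_eq_self]
    linarith
  calc ∑ i, max (v i) 0
      ≤ ∑ i, max (v i) 0 * m i := Finset.sum_le_sum fun i _ =>
        le_mul_of_one_le_right (le_max_right _ _) (hm i).1
    _ ≤ ∑ i, max (-v i) 0 * m i := hparts
    _ ≤ ∑ i, max (-v i) 0 * K := Finset.sum_le_sum fun i _ =>
        mul_le_mul_of_nonneg_left (hm i).2 (le_max_right _ _)
    _ = K * ∑ i, max (-v i) 0 := by rw [← Finset.sum_mul, mul_comm]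

theorem positive_negative_parts_comparable_general
    {Ω : Type*}
    (θ : Ω → Ω)
    (k : ℕ)
    (A : Ω → Matrix (Fin k) (Fin k) ℝ)
    (h01 : ∀ ω i j, A ω i j = 0 ∨ A ω i j = 1)
    (ω : Ω) (N : ℕ)
    (hN : ∀ i j, 1 ≤ matIter θ A N ω i j)
    (v : Fin k → ℝ)
    (hle : ∃ i, Matrix.vecMul v (matIter θ A N ω) i ≤ 0)
    (hge : ∃ j, 0 ≤ Matrix.vecMul v (matIter θ A N ω) j) :
    (∑ i, max (v i) 0) ≤ (k : ℝ) ^ N * ∑ i, max (-v i) 0 ∧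
    (∑ i, max (-v i) 0) ≤ (k : ℝ) ^ N * ∑ i, max (v i) 0 := by
  have hA : ∀ ω i j, A ω i j ∈ Set.Icc 0 1 := fun ω i j => by
    rcases h01 ω i j with h | h <;> simp [h]
  have hcol : ∀ j i, matIter θ A N ω i j ∈ Set.Icc 1 ((k : ℝ) ^ N) := fun j i =>
    ⟨hN i j, (matIter_apply_mem_Icc θ A hA N ω i j).2⟩
  obtain ⟨i, hi⟩ := hle
  obtain ⟨j, hj⟩ := hge
  refine ⟨sum_max_le_mul_sum_max_neg_of_dotProduct_nonpos (hcol i) hi, ?_⟩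
  have hneg : -v ⬝ᵥ (fun l => matIter θ A N ω l j) ≤ 0 := by
    rw [neg_dotProduct]
    exact neg_nonpos.mpr hj
  simpa using sum_max_le_mul_sum_max_neg_of_dotProduct_nonpos (hcol j) hneg

/-- Fix `ω`, `N` with all entries of `A^{(N)}(ω)` at least `1`, and
`v ∈ ℝ^k`.  If `v·A^{(N)}(ω)` has a coordinate `≤ 0` and a coordinate `≥ 0`, then
`‖v⁺‖₁ ≤ k^N ‖v⁻‖₁` and `‖v⁻‖₁ ≤ k^N ‖v⁺‖₁`, where `v⁺ᵢ = max(vᵢ,0)` and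
`v⁻ᵢ = max(-vᵢ,0)`. -/
theorem positive_negative_parts_comparable
    {Ω : Type*} [MeasurableSpace Ω]
    (ℙ : Measure Ω) [IsProbabilityMeasure ℙ]
    (θ : Ω → Ω) (hθ : MeasurePreserving θ ℙ ℙ) (hθinv : Function.Bijective θ)
    (k : ℕ) (hk : 2 ≤ k)
    (A : Ω → Matrix (Fin k) (Fin k) ℝ)
    (hAmeas : ∀ i j, Measurable fun ω => A ω i j)
    (h01 : ∀ ω i j, A ω i j = 0 ∨ A ω i j = 1)
    (ω : Ω) (N : ℕ)
    (hN : ∀ i j, 1 ≤ matIter θ A N ω i j)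
    (v : Fin k → ℝ)
    (hle : ∃ i, Matrix.vecMul v (matIter θ A N ω) i ≤ 0)
    (hge : ∃ j, 0 ≤ Matrix.vecMul v (matIter θ A N ω) j) :
    (∑ i, max (v i) 0) ≤ (k : ℝ) ^ N * ∑ i, max (-v i) 0 ∧
    (∑ i, max (-v i) 0) ≤ (k : ℝ) ^ N * ∑ i, max (v i) 0 :=
  positive_negative_parts_comparable_general θ k A h01 ω N hN v hle hge
end

section
/- Let E₀ be a nonzero finite-dimensional subspace of Y and F₀ a subspace with Y = E₀ ⊕ F₀ (direct sum). Let 0 < ε < ψ(E₀)⁻¹. Let E be a subspace of Y with Y = E ⊕ F₀, and let P : Y → Y be the projection onto F₀ along E; assume ‖P y‖_Y ≤ ε ‖y‖_Y for all y ∈ E₀. Then for every nonzero x ∈ E, ‖x‖_Y/‖x‖_* ≤ (1 + ε)/(ψ(E₀)⁻¹ − ε); in particular, if E is finite dimensional and nonzero then ψ(E) ≤ (1 + ε)/(ψ(E₀)⁻¹ − ε). -/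
/-!
Decompose `x ∈ E` along `Y = E₀ ⊕ F₀` as `x = e - P e` with `e ∈ E₀`: since `P` kills `x` and
fixes `F₀`, the `F₀`-component of `x` is `-P e`. So `x` is a perturbation of `e` of relative size
at most `ε` in `‖·‖_Y`, and hence also in the weaker norm `‖·‖_*`. The triangle inequality then
gives `‖x‖_Y ≤ (1 + ε) ‖e‖_Y` and `‖x‖_* ≥ ‖e‖_* - ε ‖e‖_Y ≥ (ψ(E₀)⁻¹ - ε) ‖e‖_Y`.
-/

theorem Submodule.exists_mem_eq_sub_apply_of_codisjoint {R M : Type*} [Ring R] [AddCommGroup M]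
    [Module R M] {E₀ F₀ : Submodule R M} (h : Codisjoint E₀ F₀) {P : M →ₗ[R] M}
    (hPF : ∀ f ∈ F₀, P f = f) {x : M} (hPx : P x = 0) : ∃ e ∈ E₀, x = e - P e := by
  obtain ⟨e, he, f, hf, rfl⟩ := Submodule.mem_sup.mp (h.eq_top ▸ Submodule.mem_top : x ∈ E₀ ⊔ F₀)
  have hf' : f = -P e := by
    rw [map_add, hPF f hf] at hPx
    exact eq_neg_of_add_eq_zero_right hPx
  exact ⟨e, he, by rw [hf', sub_eq_add_neg]⟩

theorem div_map_sub_le_of_map_le_mul {F Y : Type*} [AddGroup Y] [FunLike F Y ℝ]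
    [AddGroupSeminormClass F Y ℝ] {p q : F} (hqp : ∀ y, q y ≤ p y) {ψ ε : ℝ} {e v : Y}
    (hψ : p e ≤ ψ * q e) (hε : ε < ψ⁻¹) (he : 0 < p e) (hv : p v ≤ ε * p e) :
    p (e - v) / q (e - v) ≤ (1 + ε) / (ψ⁻¹ - ε) := by
  have hψq : 0 < ψ * q e := he.trans_le hψ
  have hψ0 : 0 < ψ := pos_of_mul_pos_left hψq (apply_nonneg q e)
  have hden : 0 < ψ⁻¹ - ε := sub_pos.mpr hε
  have hp : p (e - v) ≤ (1 + ε) * p e := by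
    linarith [map_sub_le_add p e v]
  have hq : (ψ⁻¹ - ε) * p e ≤ q (e - v) := by
    have hqe : ψ⁻¹ * p e ≤ q e := by rwa [inv_mul_le_iff₀ hψ0]
    linarith [le_map_add_map_sub q e v, hqp v]
  calc p (e - v) / q (e - v) ≤ (1 + ε) * p e / ((ψ⁻¹ - ε) * p e) :=
        div_le_div₀ ((apply_nonneg p _).trans hp) hp (mul_pos hden he) hq
    _ = (1 + ε) / (ψ⁻¹ - ε) := mul_div_mul_right _ _ he.ne'

theorem psi_upper_semicontinuous_bound_general
    {Y : Type*} [AddCommGroup Y] [Module ℝ Y]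
    (NY Ns : Y → ℝ)
    (hNYdef : ∀ x, NY x = 0 → x = 0)
    (hNYadd : ∀ x y, NY (x + y) ≤ NY x + NY y)
    (hNYsmul : ∀ (a : ℝ) (x : Y), NY (a • x) = |a| * NY x)
    (hNsdef : ∀ x, Ns x = 0 → x = 0)
    (hNsadd : ∀ x y, Ns (x + y) ≤ Ns x + Ns y)
    (hNssmul : ∀ (a : ℝ) (x : Y), Ns (a • x) = |a| * Ns x)
    (hle : ∀ x, Ns x ≤ NY x)
    (E₀ F₀ E : Submodule ℝ Y)
    (hcompl₀ : IsCompl E₀ F₀)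
    (ψ₀ : ℝ) (hψ₀ : IsLUB {r : ℝ | ∃ ξ ∈ E₀, ξ ≠ 0 ∧ r = NY ξ / Ns ξ} ψ₀)
    (ε : ℝ) (hε1 : ε < ψ₀⁻¹)
    (P : Y →ₗ[ℝ] Y)
    (hPE : ∀ x ∈ E, P x = 0) (hPF : ∀ x ∈ F₀, P x = x)
    (hPbd : ∀ y ∈ E₀, NY (P y) ≤ ε * NY y) :
    (∀ x ∈ E, x ≠ 0 → NY x / Ns x ≤ (1 + ε) / (ψ₀⁻¹ - ε)) ∧
    (E ≠ ⊥ → FiniteDimensional ℝ E →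
      ∀ ψE : ℝ, IsLUB {r : ℝ | ∃ ξ ∈ E, ξ ≠ 0 ∧ r = NY ξ / Ns ξ} ψE →
        ψE ≤ (1 + ε) / (ψ₀⁻¹ - ε)) := by
  let pY : Seminorm ℝ Y := .of NY hNYadd fun a x => by rw [Real.norm_eq_abs, hNYsmul]
  let ps : Seminorm ℝ Y := .of Ns hNsadd fun a x => by rw [Real.norm_eq_abs, hNssmul]
  have key : ∀ x ∈ E, x ≠ 0 → NY x / Ns x ≤ (1 + ε) / (ψ₀⁻¹ - ε) := by
    intro x hxE hx0
    obtain ⟨e, he, rfl⟩ :=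
      Submodule.exists_mem_eq_sub_apply_of_codisjoint hcompl₀.codisjoint hPF (hPE x hxE)
    have he0 : e ≠ 0 := by rintro rfl; simp at hx0
    have hNYe : 0 < pY e := (apply_nonneg pY e).lt_of_ne' (mt (hNYdef e) he0)
    have hNse : 0 < ps e := (apply_nonneg ps e).lt_of_ne' (mt (hNsdef e) he0)
    have hψe : pY e ≤ ψ₀ * ps e := (div_le_iff₀ hNse).mp (hψ₀.1 ⟨e, he, he0, rfl⟩)
    exact div_map_sub_le_of_map_le_mul (p := pY) (q := ps) hle hψe hε1 hNYe (hPbd e he)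
  refine ⟨key, fun _ _ ψE hψE => hψE.2 ?_⟩
  rintro _ ⟨ξ, hξE, hξ0, rfl⟩
  exact key ξ hξE hξ0

/-- Let `Y` carry two norms `NY = ‖·‖_Y` and `Ns = ‖·‖_*` with
`Ns ≤ NY`.  Let `E₀` be a nonzero finite-dimensional subspace, `F₀` with `Y = E₀ ⊕ F₀`,
and `ψ₀ = ψ(E₀) = sup{NY ξ / Ns ξ : 0 ≠ ξ ∈ E₀}`.  Let `0 < ε < ψ₀⁻¹`, let `E` be a
subspace with `Y = E ⊕ F₀` and let `P` be the projection onto `F₀` along `E` with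
`NY (P y) ≤ ε · NY y` for all `y ∈ E₀`.  Then every nonzero `x ∈ E` satisfies
`NY x / Ns x ≤ (1 + ε)/(ψ₀⁻¹ − ε)`; in particular, if `E` is nonzero and
finite-dimensional then `ψ(E) ≤ (1 + ε)/(ψ₀⁻¹ − ε)`. -/
theorem psi_upper_semicontinuous_bound
    {Y : Type*} [AddCommGroup Y] [Module ℝ Y]
    (NY Ns : Y → ℝ)
    (hNY0 : ∀ x, 0 ≤ NY x) (hNYdef : ∀ x, NY x = 0 → x = 0)
    (hNYadd : ∀ x y, NY (x + y) ≤ NY x + NY y)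
    (hNYsmul : ∀ (a : ℝ) (x : Y), NY (a • x) = |a| * NY x)
    (hNs0 : ∀ x, 0 ≤ Ns x) (hNsdef : ∀ x, Ns x = 0 → x = 0)
    (hNsadd : ∀ x y, Ns (x + y) ≤ Ns x + Ns y)
    (hNssmul : ∀ (a : ℝ) (x : Y), Ns (a • x) = |a| * Ns x)
    (hle : ∀ x, Ns x ≤ NY x)
    (E₀ F₀ E : Submodule ℝ Y)
    (hE₀ne : E₀ ≠ ⊥) [FiniteDimensional ℝ E₀]
    (hcompl₀ : IsCompl E₀ F₀) (hcompl : IsCompl E F₀)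
    (ψ₀ : ℝ) (hψ₀ : IsLUB {r : ℝ | ∃ ξ ∈ E₀, ξ ≠ 0 ∧ r = NY ξ / Ns ξ} ψ₀)
    (ε : ℝ) (hε0 : 0 < ε) (hε1 : ε < ψ₀⁻¹)
    (P : Y →ₗ[ℝ] Y)
    (hPE : ∀ x ∈ E, P x = 0) (hPF : ∀ x ∈ F₀, P x = x)
    (hPbd : ∀ y ∈ E₀, NY (P y) ≤ ε * NY y) :
    (∀ x ∈ E, x ≠ 0 → NY x / Ns x ≤ (1 + ε) / (ψ₀⁻¹ - ε)) ∧
    (E ≠ ⊥ → FiniteDimensional ℝ E →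
      ∀ ψE : ℝ, IsLUB {r : ℝ | ∃ ξ ∈ E, ξ ≠ 0 ∧ r = NY ξ / Ns ξ} ψE →
        ψE ≤ (1 + ε) / (ψ₀⁻¹ - ε)) :=
  psi_upper_semicontinuous_bound_general NY Ns hNYdef hNYadd hNYsmul hNsdef hNsadd hNssmul hle E₀ F₀
    E hcompl₀ ψ₀ hψ₀ ε hε1 P hPE hPF hPbd
end
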